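/- arXiv:math/9201278 — 6 statements merged into one kernel-verified Lean document; each statement's English description precedes it below -/
import Mathlib

section
/- Let g : I → J be a C³ diffeomorphism between open real intervals with nonnegative Schwarzian derivative S(g) = g'''/g' - (3/2)(g''/g')². Then for every x in I, the nonlinearity |g''(x)/g'(x)| is bounded above by 2/d_I(x), where d_I(x) is the distance from x to the boundary of I. -/
/-!
Where `g' ≠ 0`, the function `k = |g'|^(-1/2)` satisfies `k'' = -(S g / 2) k`, so `S g ≥ 0` makes
`k` a positive concave function on `I`. A positive concave function lies below its tangent lines
and stays positive up to the endpoints of `I`, so `|k'(x)| · d_I(x) ≤ k(x)`; since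
`k' = -(g''/2g') k`, this is the claimed bound.
-/

/-- Schwarzian derivative `S g = g'''/g' - (3/2)(g''/g')²`. -/
noncomputable def schwarzian (g : ℝ → ℝ) (x : ℝ) : ℝ :=
  deriv (deriv (deriv g)) x / deriv g x - 3 / 2 * (deriv (deriv g) x / deriv g x) ^ 2

open Set Filter Topology

theorem ConcaveOn.abs_mul_min_sub_le {a b x f' : ℝ} {f : ℝ → ℝ}
    (hconc : ConcaveOn ℝ (Ioo a b) f) (hpos : ∀ y ∈ Ioo a b, 0 < f y) (hx : x ∈ Ioo a b)
    (hf : HasDerivAt f f' x) :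
    |f'| * min (x - a) (b - x) ≤ f x := by
  have hleft : f' * (x - a) ≤ f x := by
    have hlt : ∀ y ∈ Ioo a x, f' * (x - y) ≤ f x := fun y hy => by
      have hyI : y ∈ Ioo a b := ⟨hy.1, hy.2.trans hx.2⟩
      have hslope := hconc.le_slope_of_hasDerivAt hyI hx hy.2 hf
      rw [slope_def_field, le_div_iff₀ (sub_pos.2 hy.2)] at hslope
      linarith [hpos y hyI]
    refine le_of_tendsto (x := 𝓝[>] a)
      (by fun_prop : Continuous fun y => f' * (x - y)).continuousWithinAt ?_
    filter_upwards [Ioo_mem_nhdsGT hx.1] using hlt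
  have hright : -f' * (b - x) ≤ f x := by
    have hlt : ∀ y ∈ Ioo x b, -f' * (y - x) ≤ f x := fun y hy => by
      have hyI : y ∈ Ioo a b := ⟨hx.1.trans hy.1, hy.2⟩
      have hslope := hconc.slope_le_of_hasDerivAt hx hyI hy.1 hf
      rw [slope_def_field, div_le_iff₀ (sub_pos.2 hy.1)] at hslope
      linarith [hpos y hyI]
    refine le_of_tendsto (x := 𝓝[<] b)
      (by fun_prop : Continuous fun y => -f' * (y - x)).continuousWithinAt ?_
    filter_upwards [Ioo_mem_nhdsLT hx.2] using hlt
  rcases le_total 0 f' with h0 | h0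
  · rw [abs_of_nonneg h0]
    exact (mul_le_mul_of_nonneg_left (min_le_left _ _) h0).trans hleft
  · rw [abs_of_nonpos h0]
    exact (mul_le_mul_of_nonneg_left (min_le_right _ _) (neg_nonneg.2 h0)).trans hright

noncomputable def nonlinearity (g : ℝ → ℝ) (x : ℝ) : ℝ :=
  deriv (deriv g) x / deriv g x

/-- `|g' x| ^ (-1/2)` wherever `g' x ≠ 0`, since `Real.log` is `log ∘ abs`. -/
noncomputable def invSqrtDeriv (g : ℝ → ℝ) (x : ℝ) : ℝ :=
  Real.exp (-Real.log (deriv g x) / 2)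

section Derivatives

variable {g : ℝ → ℝ} {s : Set ℝ} {x : ℝ}

theorem ContDiffOn.hasDerivAt_deriv_deriv (hs : IsOpen s) (hg : ContDiffOn ℝ 3 g s)
    (hx : x ∈ s) :
    HasDerivAt (deriv g) (deriv (deriv g) x) x ∧
      HasDerivAt (deriv (deriv g)) (deriv (deriv (deriv g)) x) x := by
  have hg1 : ContDiffOn ℝ 2 (deriv g) s := hg.deriv_of_isOpen hs (by norm_num)
  have hg2 : ContDiffOn ℝ 1 (deriv (deriv g)) s := hg1.deriv_of_isOpen hs (by norm_num)
  exact ⟨((hg1.differentiableOn (by norm_num)).differentiableAt (hs.mem_nhds hx)).hasDerivAt,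
    ((hg2.differentiableOn (by norm_num)).differentiableAt (hs.mem_nhds hx)).hasDerivAt⟩

theorem hasDerivAt_nonlinearity (hs : IsOpen s) (hg : ContDiffOn ℝ 3 g s) (hx : x ∈ s)
    (hg' : deriv g x ≠ 0) :
    HasDerivAt (nonlinearity g) (schwarzian g x + nonlinearity g x ^ 2 / 2) x := by
  obtain ⟨hd1, hd2⟩ := hg.hasDerivAt_deriv_deriv hs hx
  refine (hd2.div hd1 hg').congr_deriv ?_
  simp only [schwarzian, nonlinearity]
  field_simp
  ring

theorem hasDerivAt_invSqrtDeriv (hd : HasDerivAt (deriv g) (deriv (deriv g) x) x)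
    (hg' : deriv g x ≠ 0) :
    HasDerivAt (invSqrtDeriv g) (-(nonlinearity g x / 2) * invSqrtDeriv g x) x := by
  refine ((hd.log hg').neg.div_const 2).exp.congr_deriv ?_
  simp only [invSqrtDeriv, nonlinearity, Pi.neg_apply]
  ring

theorem hasDerivAt_deriv_invSqrtDeriv (hs : IsOpen s) (hg : ContDiffOn ℝ 3 g s)
    (hg' : ∀ y ∈ s, deriv g y ≠ 0) (hx : x ∈ s) :
    HasDerivAt (fun y => -(nonlinearity g y / 2) * invSqrtDeriv g y)
      (-(schwarzian g x / 2) * invSqrtDeriv g x) x := by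
  have hk := hasDerivAt_invSqrtDeriv (hg.hasDerivAt_deriv_deriv hs hx).1 (hg' x hx)
  refine (((hasDerivAt_nonlinearity hs hg hx (hg' x hx)).div_const 2).neg.mul hk).congr_deriv ?_
  simp only [Pi.neg_apply]
  ring

theorem concaveOn_invSqrtDeriv (hs : IsOpen s) (hconv : Convex ℝ s) (hg : ContDiffOn ℝ 3 g s)
    (hg' : ∀ y ∈ s, deriv g y ≠ 0) (hS : ∀ y ∈ s, 0 ≤ schwarzian g y) :
    ConcaveOn ℝ s (invSqrtDeriv g) := by
  have hk : ∀ y ∈ s, HasDerivAt (invSqrtDeriv g) (-(nonlinearity g y / 2) * invSqrtDeriv g y) y :=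
    fun y hy => hasDerivAt_invSqrtDeriv (hg.hasDerivAt_deriv_deriv hs hy).1 (hg' y hy)
  refine concaveOn_of_hasDerivWithinAt2_nonpos hconv
    (f' := fun y => -(nonlinearity g y / 2) * invSqrtDeriv g y)
    (f'' := fun y => -(schwarzian g y / 2) * invSqrtDeriv g y)
    (fun y hy => (hk y hy).continuousAt.continuousWithinAt) ?_ ?_ ?_ <;> rw [hs.interior_eq]
  · exact fun y hy => (hk y hy).hasDerivWithinAt
  · exact fun y hy => (hasDerivAt_deriv_invSqrtDeriv hs hg hg' hy).hasDerivWithinAt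
  · intro y hy
    have hkpos : 0 < invSqrtDeriv g y := Real.exp_pos _
    nlinarith [hS y hy]

end Derivatives

theorem stmt_0_general (a b : ℝ) (g : ℝ → ℝ)
    (hg : ContDiffOn ℝ 3 g (Set.Ioo a b))
    (hg' : ∀ x ∈ Set.Ioo a b, deriv g x ≠ 0)
    (hS : ∀ x ∈ Set.Ioo a b, 0 ≤ schwarzian g x) :
    ∀ x ∈ Set.Ioo a b,
      |deriv (deriv g) x / deriv g x| ≤ 2 / min (x - a) (b - x) := by
  intro x hx
  have hconc := concaveOn_invSqrtDeriv isOpen_Ioo (convex_Ioo a b) hg hg' hS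
  have hbound := hconc.abs_mul_min_sub_le (fun y _ => Real.exp_pos _) hx
    (hasDerivAt_invSqrtDeriv (hg.hasDerivAt_deriv_deriv isOpen_Ioo hx).1 (hg' x hx))
  have hkpos : 0 < invSqrtDeriv g x := Real.exp_pos _
  have hmin : 0 < min (x - a) (b - x) := lt_min (by linarith [hx.1]) (by linarith [hx.2])
  rw [abs_mul, abs_of_pos hkpos, abs_neg, abs_div, abs_two] at hbound
  rw [le_div_iff₀ hmin]
  change |nonlinearity g x| * min (x - a) (b - x) ≤ 2
  nlinarith

/-- The C³ Koebe distortion lemma: a C³ diffeomorphism between open intervals with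
nonnegative Schwarzian derivative has nonlinearity bounded by `2 / d_I(x)`. -/
theorem stmt_0 (a b c d : ℝ) (hab : a < b) (hcd : c < d) (g : ℝ → ℝ)
    (hg : ContDiffOn ℝ 3 g (Set.Ioo a b))
    (hginj : Set.InjOn g (Set.Ioo a b))
    (hgsurj : g '' Set.Ioo a b = Set.Ioo c d)
    (hg' : ∀ x ∈ Set.Ioo a b, deriv g x ≠ 0)
    (hS : ∀ x ∈ Set.Ioo a b, 0 ≤ schwarzian g x) :
    ∀ x ∈ Set.Ioo a b,
      |deriv (deriv g) x / deriv g x| ≤ 2 / min (x - a) (b - x) :=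
  stmt_0_general a b g hg hg' hS
end

section
/- Suppose f : [0,1] → [0,1] is continuous, and I ⊆ [0,1] is a nondegenerate interval such that f^n restricted to I is injective for every n ≥ 0 (an ∞-homterval). If every fixed point of every iterate f^k is topologically repelling, then the intervals I, f(I), f²(I), … have pairwise disjoint interiors. -/
open Set
open Set

/-- The infimum of points where `h` drops below the identity is a fixed point. -/
lemma sInf_mem_fixed {h : ℝ → ℝ} {c d e : ℝ} (hc : ContinuousOn h (Set.Icc c d))
    (he : e ∈ Set.Icc c d) (hee : e ≤ h e) (hdd : h d ≤ d) :
    ∃ p ∈ Set.Icc e d, h p = p ∧ ∀ y, y ∈ Set.Icc e d → y < p → y < h y := by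
  set S : Set ℝ := {x | x ∈ Set.Icc e d ∧ h x ≤ x} with hS
  have hed : e ≤ d := he.2
  have hdS : d ∈ S := ⟨⟨hed, le_refl d⟩, hdd⟩
  have hne : S.Nonempty := ⟨d, hdS⟩
  have hbdd : BddBelow S := ⟨e, fun x hx => hx.1.1⟩
  set p := sInf S with hp
  have hpe : e ≤ p := le_csInf hne fun x hx => hx.1.1
  have hpd : p ≤ d := csInf_le hbdd hdS
  have hpcd : p ∈ Set.Icc c d := ⟨le_trans he.1 hpe, hpd⟩
  have hlow : ∀ y, y ∈ Set.Icc e d → y < p → y < h y := by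
    intro y hy hyp
    by_contra hcon
    push_neg at hcon
    exact absurd (csInf_le hbdd ⟨hy, hcon⟩) (not_le.mpr hyp)
  have hple : h p ≤ p := by
    obtain ⟨u, -, hu_tend, hu_mem⟩ := exists_seq_tendsto_sInf hne hbdd
    have hu_tend' : Filter.Tendsto u Filter.atTop (nhds p) := hu_tend
    have htend : Filter.Tendsto (fun n => h (u n)) Filter.atTop (nhds (h p)) := by
      have hcw : ContinuousWithinAt h (Set.Icc c d) p := hc p hpcd
      exact hcw.tendsto.comp (tendsto_nhdsWithin_iff.mpr ⟨hu_tend',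
        Filter.Eventually.of_forall fun n =>
          ⟨le_trans he.1 (hu_mem n).1.1, (hu_mem n).1.2⟩⟩)
    exact le_of_tendsto_of_tendsto' htend hu_tend' fun n => (hu_mem n).2
  have hfix : h p = p := by
    rcases eq_or_lt_of_le hple with heq | hlt
    · exact heq
    · exfalso
      have hep : e < p := by
        rcases eq_or_lt_of_le hpe with heq' | h' 
        · exfalso; rw [← heq'] at hlt; linarith
        · exact h'
      have hsub : Set.Icc e p ⊆ Set.Icc c d := Set.Icc_subset_Icc he.1 hpd
      have φcont : ContinuousOn (fun x => h x - x) (Set.Icc e p) :=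
        (hc.mono hsub).sub continuousOn_id
      have h0 : (0 : ℝ) ∈ Set.Icc (h p - p) (h e - e) := ⟨by linarith, by linarith⟩
      obtain ⟨w, hw, hw0⟩ := intermediate_value_Icc' (le_of_lt hep) φcont h0
      have hwfix : h w = w := by dsimp at hw0; linarith
      have hwS : w ∈ S := ⟨⟨hw.1, le_trans hw.2 hpd⟩, le_of_eq hwfix⟩
      have : p ≤ w := csInf_le hbdd hwS
      have : w = p := le_antisymm hw.2 this
      rw [this] at hwfix; linarith
  exact ⟨p, ⟨hpe, hpd⟩, hfix, hlow⟩

/-- Right trap: orbit of a point just right of a fixed point `p` stays in `[p, x]`. -/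
lemma right_trap {h : ℝ → ℝ} {c d p x : ℝ} (hm : MonotoneOn h (Set.Icc c d))
    (hp : p ∈ Set.Icc c d) (hx : x ∈ Set.Icc c d) (hfix : h p = p) (hpx : p ≤ x)
    (hlt : ∀ y, p < y → y ≤ x → h y ≤ y) : ∀ m : ℕ, h^[m] x ∈ Set.Icc p x := by
  intro m
  induction m with
  | zero => exact ⟨hpx, le_refl x⟩
  | succ m ih =>
    rw [Function.iterate_succ_apply']
    set y := h^[m] x with hy
    have hycd : y ∈ Set.Icc c d := ⟨le_trans hp.1 ih.1, le_trans ih.2 hx.2⟩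
    refine ⟨?_, ?_⟩
    · calc p = h p := hfix.symm
        _ ≤ h y := hm hp hycd ih.1
    · rcases eq_or_lt_of_le ih.1 with heq | hlt'
      · rw [← heq, hfix]; exact hpx
      · exact le_trans (hlt y hlt' ih.2) ih.2

/-- Left trap: orbit of a point just left of a fixed point `p` stays in `[x, p]`. -/
lemma left_trap {h : ℝ → ℝ} {c d p x : ℝ} (hm : MonotoneOn h (Set.Icc c d))
    (hp : p ∈ Set.Icc c d) (hx : x ∈ Set.Icc c d) (hfix : h p = p) (hxp : x ≤ p)
    (hge : ∀ y, x ≤ y → y < p → y ≤ h y) : ∀ m : ℕ, h^[m] x ∈ Set.Icc x p := by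
  intro m
  induction m with
  | zero => exact ⟨le_refl x, hxp⟩
  | succ m ih =>
    rw [Function.iterate_succ_apply']
    set y := h^[m] x with hy
    have hycd : y ∈ Set.Icc c d := ⟨le_trans hx.1 ih.1, le_trans ih.2 hp.2⟩
    refine ⟨?_, ?_⟩
    · rcases eq_or_lt_of_le ih.2 with heq | hlt'
      · rw [heq, hfix]; exact hxp
      · exact le_trans ih.1 (hge y ih.1 hlt')
    · calc h y ≤ h p := hm hycd hp ih.2
        _ = p := hfix

/-- Sign propagation on a fixed-point-free order-connected set. -/
lemma negSign_propagate {h : ℝ → ℝ} {c d : ℝ} (hc : ContinuousOn h (Set.Icc c d)) {s : Set ℝ}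
    (hs : s ⊆ Set.Icc c d) (hso : s.OrdConnected) (hnf : ∀ y ∈ s, h y ≠ y)
    {y z : ℝ} (hy : y ∈ s) (hz : z ∈ s) (hyp : h y < y) : h z < z := by
  by_contra hcon
  push_neg at hcon
  have hzlt : z < h z := lt_of_le_of_ne hcon (fun e => hnf z hz e.symm)
  have hsub : Set.uIcc y z ⊆ s := hso.uIcc_subset hy hz
  have φcont : ContinuousOn (fun x => h x - x) (Set.uIcc y z) :=
    (hc.mono (hsub.trans hs)).sub continuousOn_id
  have h0 : (0:ℝ) ∈ Set.uIcc (h y - y) (h z - z) :=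
    Set.mem_uIcc.mpr (Or.inl ⟨by linarith, by linarith⟩)
  obtain ⟨w, hw, hw0⟩ := intermediate_value_uIcc φcont h0
  have : h w = w := by dsimp at hw0; linarith
  exact hnf w (hsub hw) this
/-- Key lemma: a monotone continuous self-map of `[c,d]` has a non-repelling fixed point. -/
lemma key_nonrepelling {h : ℝ → ℝ} {c d : ℝ} (hcd : c < d)
    (hc : ContinuousOn h (Set.Icc c d)) (hm : MonotoneOn h (Set.Icc c d))
    (hmap : Set.MapsTo h (Set.Icc c d) (Set.Icc c d)) :
    ∃ p ∈ Set.Icc c d, h p = p ∧ ∀ δ > 0, ∃ x ∈ Set.Icc c d, x ≠ p ∧ |x - p| < δ ∧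
      ∀ m : ℕ, h^[m] x ∈ Set.uIcc p x := by
  have hccd : c ∈ Set.Icc c d := ⟨le_refl c, hcd.le⟩
  have hdcd : d ∈ Set.Icc c d := ⟨hcd.le, le_refl d⟩
  have hcc : c ≤ h c := (hmap hccd).1
  have hdd : h d ≤ d := (hmap hdcd).2
  obtain ⟨p, hpmem, hpfix, hplow⟩ := sInf_mem_fixed hc hccd hcc hdd
  rcases lt_or_eq_of_le hpmem.1 with hcp | hcp
  · -- c < p : left trap at p
    refine ⟨p, hpmem, hpfix, fun δ hδ => ?_⟩
    set x := max c (p - δ/2) with hxdef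
    have hxp : x < p := max_lt hcp (by linarith)
    have hxmem : x ∈ Set.Icc c d := ⟨le_max_left _ _, le_trans hxp.le hpmem.2⟩
    have htrap := left_trap hm hpmem hxmem hpfix hxp.le
      (fun y hxy hyp => (hplow y ⟨le_trans hxmem.1 hxy, le_trans hyp.le hpmem.2⟩ hyp).le)
    refine ⟨x, hxmem, ne_of_lt hxp, ?_, fun m => ?_⟩
    · have h1 : p - δ/2 ≤ x := le_max_right _ _
      rw [abs_sub_lt_iff]; constructor <;> linarith
    · rw [Set.uIcc_of_ge hxp.le]; exact htrap m
  · -- p = c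
    have hfc : h c = c := by rw [hcp]; exact hpfix
    by_cases hacc : ∀ η > 0, ∃ y ∈ Set.Icc c d, y ≠ c ∧ y - c < η ∧ h y = y
    · refine ⟨c, hccd, hfc, fun δ hδ => ?_⟩
      obtain ⟨y, hy, hyne, hyδ, hyfix⟩ := hacc δ hδ
      refine ⟨y, hy, hyne, ?_, fun m => ?_⟩
      · rw [abs_of_nonneg (by linarith [hy.1])]; exact hyδ
      · rw [Function.iterate_fixed hyfix]; exact Set.right_mem_uIcc
    · push_neg at hacc
      obtain ⟨η, hη, hnofix⟩ := hacc
      set e := min d (c + η/2) with hedef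
      have hce : c < e := lt_min hcd (by linarith)
      have hemem : e ∈ Set.Icc c d := ⟨hce.le, min_le_left _ _⟩
      have hnf : ∀ y ∈ Set.Ioc c e, h y ≠ y := by
        intro y hy
        have hyd : y ≤ d := le_trans hy.2 (min_le_left _ _)
        have hyη : y - c < η := by
          have : y ≤ c + η/2 := le_trans hy.2 (min_le_right _ _)
          linarith
        exact hnofix y ⟨hy.1.le, hyd⟩ (ne_of_gt hy.1) hyη
      have hene : h e ≠ e := hnf e ⟨hce, le_refl e⟩
      rcases lt_or_gt_of_ne hene with hlt | hgt
      · -- h e < e : right trap at c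
        have hsign : ∀ y ∈ Set.Ioc c e, h y < y := fun y hy =>
          negSign_propagate hc (fun z hz => ⟨hz.1.le, le_trans hz.2 hemem.2⟩)
            Set.ordConnected_Ioc hnf ⟨hce, le_refl e⟩ hy hlt
        refine ⟨c, hccd, hfc, fun δ hδ => ?_⟩
        set x := min e (c + δ/2) with hxdef
        have hcx : c < x := lt_min hce (by linarith)
        have hxmem : x ∈ Set.Icc c d := ⟨hcx.le, le_trans (min_le_left _ _) hemem.2⟩
        have htrap := right_trap hm hccd hxmem hfc hcx.le
          (fun y hcy hyx => (hsign y ⟨hcy, le_trans hyx (min_le_left _ _)⟩).le)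
        refine ⟨x, hxmem, ne_of_gt hcx, ?_, fun m => ?_⟩
        · have h1 : x ≤ c + δ/2 := min_le_right _ _
          rw [abs_of_pos (by linarith)]; linarith
        · rw [Set.uIcc_of_le hcx.le]; exact htrap m
      · -- h e > e : there is a fixed point above e; left trap there
        obtain ⟨r, hrmem, hrfix, hrlow⟩ := sInf_mem_fixed hc hemem hgt.le hdd
        have her : e < r := lt_of_le_of_ne hrmem.1 (fun heq => hene (by rw [heq]; exact hrfix))
        have hrcd : r ∈ Set.Icc c d := ⟨le_trans hemem.1 hrmem.1, hrmem.2⟩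
        refine ⟨r, hrcd, hrfix, fun δ hδ => ?_⟩
        set x := max e (r - δ/2) with hxdef
        have hxr : x < r := max_lt her (by linarith)
        have hxmem' : x ∈ Set.Icc e d := ⟨le_max_left _ _, le_trans hxr.le hrmem.2⟩
        have hxmem : x ∈ Set.Icc c d := ⟨le_trans hemem.1 hxmem'.1, hxmem'.2⟩
        have htrap := left_trap hm hrcd hxmem hrfix hxr.le
          (fun y hxy hyr => (hrlow y ⟨le_trans hxmem'.1 hxy, le_trans hyr.le hrmem.2⟩ hyr).le)
        refine ⟨x, hxmem, ne_of_lt hxr, ?_, fun m => ?_⟩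
        · have h1 : r - δ/2 ≤ x := le_max_right _ _
          rw [abs_sub_lt_iff]; constructor <;> linarith
        · rw [Set.uIcc_of_ge hxr.le]; exact htrap m
lemma glue_ord {s t : Set ℝ} (hs : s.OrdConnected) (ht : t.OrdConnected)
    (hst : (s ∩ t).Nonempty) : (s ∪ t).OrdConnected := by
  obtain ⟨w, hws, hwt⟩ := hst
  constructor
  rintro x (hx | hx) y (hy | hy) z hz
  · exact Or.inl (hs.out hx hy hz)
  · rcases le_total z w with hzw | hwz
    · exact Or.inl (hs.out hx hws ⟨hz.1, hzw⟩)
    · exact Or.inr (ht.out hwt hy ⟨hwz, hz.2⟩)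
  · rcases le_total z w with hzw | hwz
    · exact Or.inr (ht.out hx hwt ⟨hz.1, hzw⟩)
    · exact Or.inl (hs.out hws hy ⟨hwz, hz.2⟩)
  · exact Or.inr (ht.out hx hy hz)

lemma glue_mono_case {g : ℝ → ℝ} {s t : Set ℝ} (hs : s.OrdConnected) (ht : t.OrdConnected)
    (hms : StrictMonoOn g s) (hmt : StrictMonoOn g t) (hst : (s ∩ t).Nonempty)
    {x y : ℝ} (hx : x ∈ s) (hy : y ∈ t) (hxy : x < y) : g x < g y := by
  by_cases hys : y ∈ s
  · exact hms hx hys hxy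
  by_cases hxt : x ∈ t
  · exact hmt hxt hy hxy
  obtain ⟨w, hws, hwt⟩ := hst
  have hxw : x ≤ w := by
    by_contra hc
    push_neg at hc
    exact hxt (ht.out hwt hy ⟨hc.le, hxy.le⟩)
  have hwy : w ≤ y := by
    by_contra hc
    push_neg at hc
    exact hys (hs.out hx hws ⟨hxy.le, hc.le⟩)
  have hxw' : x < w := lt_of_le_of_ne hxw (fun e => hxt (e ▸ hwt))
  have hwy' : w < y := lt_of_le_of_ne hwy (fun e => hys (e ▸ hws))
  exact lt_trans (hms hx hws hxw') (hmt hwt hy hwy')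

lemma glue_mono {g : ℝ → ℝ} {s t : Set ℝ} (hs : s.OrdConnected) (ht : t.OrdConnected)
    (hms : StrictMonoOn g s) (hmt : StrictMonoOn g t) (hst : (s ∩ t).Nonempty) :
    StrictMonoOn g (s ∪ t) := by
  rintro x (hx | hx) y (hy | hy) hxy
  · exact hms hx hy hxy
  · exact glue_mono_case hs ht hms hmt hst hx hy hxy
  · exact glue_mono_case ht hs hmt hms (Set.inter_comm s t ▸ hst) hx hy hxy
  · exact hmt hx hy hxy

lemma chain_mono {g : ℝ → ℝ} (A : ℕ → Set ℝ)
    (hord : ∀ i, (A i).OrdConnected)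
    (hmono : ∀ i, StrictMonoOn g (A i))
    (hover : ∀ i, (A i ∩ A (i + 1)).Nonempty) :
    StrictMonoOn g (⋃ i, A i) ∧ (⋃ i, A i).OrdConnected := by
  set U : ℕ → Set ℝ := fun L => ⋃ i ∈ Finset.range (L + 1), A i with hUdef
  have hAU : ∀ i L, i ≤ L → A i ⊆ U L := fun i L hiL x hx =>
    Set.mem_biUnion (Finset.mem_range.mpr (by omega)) hx
  have hUstep : ∀ L, U (L + 1) = U L ∪ A (L + 1) := by
    intro L
    ext z
    simp only [hUdef, Set.mem_iUnion, Finset.mem_range, Set.mem_union]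
    constructor
    · rintro ⟨i, hi, hz⟩
      rcases Nat.lt_or_ge i (L + 1) with h | h
      · exact Or.inl ⟨i, h, hz⟩
      · have : i = L + 1 := by omega
        exact Or.inr (this ▸ hz)
    · rintro (⟨i, hi, hz⟩ | hz)
      · exact ⟨i, by omega, hz⟩
      · exact ⟨L + 1, by omega, hz⟩
  have hU : ∀ L, StrictMonoOn g (U L) ∧ (U L).OrdConnected := by
    intro L
    induction L with
    | zero =>
      have : U 0 = A 0 := by simp [hUdef]
      rw [this]; exact ⟨hmono 0, hord 0⟩
    | succ L ih =>
      rw [hUstep L]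
      have hov : (U L ∩ A (L + 1)).Nonempty :=
        (hover L).mono (Set.inter_subset_inter_left _ (hAU L L le_rfl))
      exact ⟨glue_mono ih.2 (hord _) ih.1 (hmono _) hov, glue_ord ih.2 (hord _) hov⟩
  constructor
  · intro x hx y hy hxy
    obtain ⟨i, hxi⟩ := Set.mem_iUnion.mp hx
    obtain ⟨j, hyj⟩ := Set.mem_iUnion.mp hy
    exact (hU (max i j)).1 (hAU i _ (le_max_left _ _) hxi) (hAU j _ (le_max_right _ _) hyj) hxy
  · constructor
    intro x hx y hy z hz
    obtain ⟨i, hxi⟩ := Set.mem_iUnion.mp hx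
    obtain ⟨j, hyj⟩ := Set.mem_iUnion.mp hy
    have := (hU (max i j)).2.out (hAU i _ (le_max_left _ _) hxi)
      (hAU j _ (le_max_right _ _) hyj) hz
    obtain ⟨l, hl, hzl⟩ := by
      simpa only [hUdef, Set.mem_iUnion, Finset.mem_range] using this
    exact Set.mem_iUnion.mpr ⟨l, hzl⟩

lemma not_mono_anti {g : ℝ → ℝ} {s t : Set ℝ} (hms : StrictMonoOn g s)
    (hat : StrictAntiOn g t) {u v : ℝ} (hu : u ∈ s ∩ t) (hv : v ∈ s ∩ t)
    (huv : u ≠ v) : False := by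
  rcases lt_or_gt_of_ne huv with h | h
  · exact absurd (hms hu.1 hv.1 h) (not_lt_of_gt (hat hu.2 hv.2 h))
  · exact absurd (hms hv.1 hu.1 h) (not_lt_of_gt (hat hv.2 hu.2 h))

lemma iter_cont_maps {f : ℝ → ℝ} (hfc : ContinuousOn f (Set.Icc 0 1))
    (hmaps : Set.MapsTo f (Set.Icc 0 1) (Set.Icc 0 1)) (j : ℕ) :
    ContinuousOn (f^[j]) (Set.Icc (0:ℝ) 1) ∧
      Set.MapsTo (f^[j]) (Set.Icc (0:ℝ) 1) (Set.Icc (0:ℝ) 1) := by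
  induction j with
  | zero => exact ⟨continuousOn_id, Set.mapsTo_id _⟩
  | succ j ih =>
    rw [Function.iterate_succ']
    exact ⟨hfc.comp ih.1 ih.2, hmaps.comp ih.2⟩
/-- A fixed point `p` of the iterate `f^[k]` is topologically repelling (relative to
`[0,1]`) if some neighborhood `U` of `p` is eventually left by every orbit of `f^[k]`
starting in `U ∩ [0,1] \ {p}`. -/
def TopologicallyRepelling (f : ℝ → ℝ) (k : ℕ) (p : ℝ) : Prop :=
  ∃ U ∈ nhds p, ∀ x ∈ U ∩ Set.Icc (0 : ℝ) 1, x ≠ p → ∃ m : ℕ, (f^[k])^[m] x ∉ U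
lemma main_aux (f : ℝ → ℝ) (a b : ℝ) (hab : a < b)
    (hfc : ContinuousOn f (Set.Icc 0 1))
    (hmaps : Set.MapsTo f (Set.Icc 0 1) (Set.Icc 0 1))
    (hI : Set.Icc a b ⊆ Set.Icc (0 : ℝ) 1)
    (hhom : ∀ n : ℕ, Set.InjOn (f^[n]) (Set.Icc a b))
    (hrep : ∀ k : ℕ, 1 ≤ k → ∀ p ∈ Set.Icc (0 : ℝ) 1, f^[k] p = p →
      TopologicallyRepelling f k p)
    {m n : ℕ} (hmn : m < n)
    (hover : (interior (f^[m] '' Set.Icc a b) ∩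
      interior (f^[n] '' Set.Icc a b)).Nonempty) : False := by
  set k := n - m with hkdef
  have hk : 1 ≤ k := by omega
  have hmk : m + k * 1 = n := by omega
  have IC := iter_cont_maps hfc hmaps
  set A : ℕ → Set ℝ := fun i => f^[m + k * i] '' Set.Icc a b with hAdef
  have hA0 : f^[m] '' Set.Icc a b = A 0 := by simp [hAdef]
  have hA1 : f^[n] '' Set.Icc a b = A 1 := by rw [hAdef]; simp only [hmk]
  have hAsub : ∀ i, A i ⊆ Set.Icc (0:ℝ) 1 := fun i =>
    (Set.image_mono hI).trans ((IC _).2.image_subset)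
  have contA : ∀ j : ℕ, ContinuousOn (f^[j]) (Set.Icc a b) := fun j => (IC j).1.mono hI
  have hAne : ∀ i, (A i).Nonempty := fun i => (Set.nonempty_Icc.mpr hab.le).image _
  have hIcc : ∀ i, ∃ ci di : ℝ, ci ≤ di ∧ A i = Set.Icc ci di := by
    intro i
    have hconn : IsConnected (A i) := ⟨hAne i, isPreconnected_Icc.image _ (contA _)⟩
    have hcomp : IsCompact (A i) := isCompact_Icc.image_of_continuousOn (contA _)
    refine ⟨sInf (A i), sSup (A i), ?_, eq_Icc_of_connected_compact hconn hcomp⟩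
    obtain ⟨x, hx⟩ := hAne i
    have := eq_Icc_of_connected_compact hconn hcomp
    rw [this] at hx
    exact le_trans hx.1 hx.2
  have hordA : ∀ i, (A i).OrdConnected := fun i =>
    (isPreconnected_Icc.image _ (contA _)).ordConnected
  set g : ℝ → ℝ := f^[k] with hgdef
  -- g maps A i into A (i+1)
  have hgA : ∀ i x, x ∈ A i → g x ∈ A (i + 1) := by
    rintro i x ⟨s, hs, rfl⟩
    refine ⟨s, hs, ?_⟩
    rw [show m + k * (i + 1) = k + (m + k * i) by ring, Function.iterate_add_apply]
  -- g is injective on each A i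
  have hinjA : ∀ i, Set.InjOn g (A i) := by
    rintro i x hx y hy hgxy
    obtain ⟨s, hs, rfl⟩ := hx
    obtain ⟨t, ht, rfl⟩ := hy
    have e1 : f^[k + (m + k * i)] s = f^[k] (f^[m + k * i] s) :=
      Function.iterate_add_apply f k (m + k * i) s
    have e2 : f^[k + (m + k * i)] t = f^[k] (f^[m + k * i] t) :=
      Function.iterate_add_apply f k (m + k * i) t
    rw [hhom _ hs ht (e1.trans (hgxy.trans e2.symm))]
  -- two distinct points in A 0 ∩ A 1
  obtain ⟨w, hw⟩ := hover
  rw [hA0, hA1] at hw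
  obtain ⟨ρ, hρ, hball⟩ := Metric.isOpen_iff.mp (isOpen_interior.inter isOpen_interior) w hw
  set u := w with hudef
  set v := w + ρ / 2 with hvdef
  have huv : u < v := by rw [hudef, hvdef]; linarith
  have hsubuv : Set.Icc u v ⊆ A 0 ∩ A 1 := by
    intro z hz
    have : z ∈ Metric.ball w ρ := by
      rw [Metric.mem_ball, Real.dist_eq]
      rw [hudef] at hz; rw [hvdef] at hz
      rw [abs_sub_lt_iff]; constructor <;> [linarith [hz.2]; linarith [hz.1]]
    exact ⟨interior_subset (hball this).1, interior_subset (hball this).2⟩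
  have hu0 : u ∈ A 0 := (hsubuv (Set.left_mem_Icc.mpr huv.le)).1
  have hu1 : u ∈ A 1 := (hsubuv (Set.left_mem_Icc.mpr huv.le)).2
  have hv0 : v ∈ A 0 := (hsubuv (Set.right_mem_Icc.mpr huv.le)).1
  have hv1 : v ∈ A 1 := (hsubuv (Set.right_mem_Icc.mpr huv.le)).2
  -- pushforward of points along iterates of g
  have himg : ∀ (j i : ℕ) (x : ℝ), x ∈ A j → f^[k * i] x ∈ A (j + i) := by
    rintro j i x ⟨s, hs, rfl⟩
    refine ⟨s, hs, ?_⟩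
    rw [show m + k * (j + i) = k * i + (m + k * j) by ring, Function.iterate_add_apply]
  have hinj0 : ∀ i : ℕ, Set.InjOn (f^[k * i]) (A 0) := by
    rintro i x hx y hy he
    obtain ⟨s, hs, rfl⟩ := hx
    obtain ⟨t, ht, rfl⟩ := hy
    have : f^[k * i + m] s = f^[k * i + m] t := by
      rw [Function.iterate_add_apply, Function.iterate_add_apply]
      simpa [hAdef] using he
    rw [hhom _ hs ht this]
  have hoverA : ∀ i : ℕ, ∃ p q : ℝ, p ∈ A i ∩ A (i+1) ∧ q ∈ A i ∩ A (i+1) ∧ p ≠ q := by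
    intro i
    refine ⟨f^[k * i] u, f^[k * i] v, ⟨?_, ?_⟩, ⟨?_, ?_⟩, ?_⟩
    · have := himg 0 i u hu0; rwa [zero_add] at this
    · have := himg 1 i u hu1; rwa [add_comm 1 i] at this
    · have := himg 0 i v hv0; rwa [zero_add] at this
    · have := himg 1 i v hv1; rwa [add_comm 1 i] at this
    · intro he
      exact absurd (hinj0 i hu0 hv0 he) (ne_of_lt huv)
  have hoverA' : ∀ i : ℕ, (A i ∩ A (i+1)).Nonempty := by
    intro i; obtain ⟨p, q, hp, _, _⟩ := hoverA i; exact ⟨p, hp⟩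
  -- orientation on each A i
  have hma : ∀ i, StrictMonoOn g (A i) ∨ StrictAntiOn g (A i) := by
    intro i
    obtain ⟨ci, di, hle, hEq⟩ := hIcc i
    rw [hEq]
    exact ContinuousOn.strictMonoOn_of_injOn_Icc' hle
      ((IC k).1.mono (hEq ▸ hAsub i)) (hEq ▸ hinjA i)
  -- the union T
  set T : Set ℝ := ⋃ i, A i with hTdef
  have hTsub : T ⊆ Set.Icc (0:ℝ) 1 := Set.iUnion_subset hAsub
  have hgT : ∀ x ∈ T, g x ∈ T := by
    intro x hx
    obtain ⟨i, hxi⟩ := Set.mem_iUnion.mp hx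
    exact Set.mem_iUnion.mpr ⟨i + 1, hgA i x hxi⟩
  -- monotone or antitone on T
  have hTprop : (StrictMonoOn g T ∨ StrictAntiOn g T) ∧ T.OrdConnected := by
    rcases hma 0 with h0 | h0
    · have hall : ∀ i, StrictMonoOn g (A i) := by
        intro i
        induction i with
        | zero => exact h0
        | succ i ih =>
          rcases hma (i + 1) with h' | h'
          · exact h'
          · obtain ⟨p, q, hp, hq, hpq⟩ := hoverA i
            exact absurd (not_mono_anti ih h' ⟨hp.1, hp.2⟩ ⟨hq.1, hq.2⟩ hpq) not_false
      have := chain_mono A hordA hall hoverA'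
      exact ⟨Or.inl this.1, this.2⟩
    · have hall : ∀ i, StrictAntiOn g (A i) := by
        intro i
        induction i with
        | zero => exact h0
        | succ i ih =>
          rcases hma (i + 1) with h' | h'
          · obtain ⟨p, q, hp, hq, hpq⟩ := hoverA i
            exact absurd (not_mono_anti h' ih ⟨hp.2, hp.1⟩ ⟨hq.2, hq.1⟩ hpq) not_false
          · exact h'
      have hall' : ∀ i, StrictMonoOn (fun x => -(g x)) (A i) :=
        fun i x hx y hy hxy => neg_lt_neg (hall i hx hy hxy)
      have := chain_mono A hordA hall' hoverA'
      refine ⟨Or.inr fun x hx y hy hxy => ?_, this.2⟩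
      have := this.1 hx hy hxy
      simpa using this
  -- h2 = f^[2k] is strictly monotone on T
  set h2 : ℝ → ℝ := f^[2 * k] with h2def
  have heq2 : ∀ x, h2 x = g (g x) := by
    intro x
    rw [h2def, hgdef, show 2 * k = k + k by ring, Function.iterate_add_apply]
  have hmono2 : StrictMonoOn h2 T := by
    intro x hx y hy hxy
    rw [heq2, heq2]
    rcases hTprop.1 with hmono | hanti
    · exact hmono (hgT x hx) (hgT y hy) (hmono hx hy hxy)
    · exact hanti (hgT y hy) (hgT x hx) (hanti hx hy hxy)
  have h2T : ∀ x ∈ T, h2 x ∈ T := by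
    intro x hx; rw [heq2]; exact hgT _ (hgT x hx)
  -- the closure C of T
  set C := closure T with hCdef
  have hCsub : C ⊆ Set.Icc (0:ℝ) 1 := closure_minimal hTsub isClosed_Icc
  have hTne : T.Nonempty := ⟨u, Set.mem_iUnion.mpr ⟨0, hu0⟩⟩
  have hCconn : IsConnected C :=
    ⟨hTne.closure, (isPreconnected_iff_ordConnected.mpr hTprop.2).closure⟩
  have hCcomp : IsCompact C := isCompact_Icc.of_isClosed_subset isClosed_closure hCsub
  have hCIcc := eq_Icc_of_connected_compact hCconn hCcomp
  set c := sInf C with hcdef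
  set d := sSup C with hddef
  have hcd : c < d := by
    have hu' : u ∈ C := subset_closure (Set.mem_iUnion.mpr ⟨0, hu0⟩)
    have hv' : v ∈ C := subset_closure (Set.mem_iUnion.mpr ⟨0, hv0⟩)
    rw [hCIcc] at hu' hv'
    calc c ≤ u := hu'.1
      _ < v := huv
      _ ≤ d := hv'.2
  have hcont2 : ContinuousOn h2 (Set.Icc (0:ℝ) 1) := (IC (2 * k)).1
  have hcontC : ContinuousOn h2 C := hcont2.mono hCsub
  -- h2 maps C into C
  have hmapC : Set.MapsTo h2 C C := by
    intro x hx
    have h1 : h2 x ∈ h2 '' closure T := ⟨x, hx, rfl⟩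
    have h2' : h2 '' closure T ⊆ closure (h2 '' T) :=
      ContinuousOn.image_closure (hcont2.mono hCsub)
    have h3 : closure (h2 '' T) ⊆ closure T :=
      closure_mono (fun z ⟨y, hy, he⟩ => he ▸ h2T y hy)
    exact h3 (h2' h1)
  -- h2 is monotone on C by a limiting argument
  have hmonoC : MonotoneOn h2 C := by
    intro x hx y hy hxy
    obtain ⟨xs, hxs, hxst⟩ := mem_closure_iff_seq_limit.mp hx
    obtain ⟨ys, hys, hyst⟩ := mem_closure_iff_seq_limit.mp hy
    set as : ℕ → ℝ := fun n => min (xs n) (ys n) with hasdef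
    set bs : ℕ → ℝ := fun n => max (xs n) (ys n) with hbsdef
    have hasT : ∀ n, as n ∈ T := by
      intro n
      rcases le_total (xs n) (ys n) with h | h
      · simpa [hasdef, min_eq_left h] using hxs n
      · simpa [hasdef, min_eq_right h] using hys n
    have hbsT : ∀ n, bs n ∈ T := by
      intro n
      rcases le_total (xs n) (ys n) with h | h
      · simpa [hbsdef, max_eq_right h] using hys n
      · simpa [hbsdef, max_eq_left h] using hxs n
    have hast : Filter.Tendsto as Filter.atTop (nhds x) := by
      have := hxst.min hyst
      rwa [min_eq_left hxy] at this
    have hbst : Filter.Tendsto bs Filter.atTop (nhds y) := by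
      have := hxst.max hyst
      rwa [max_eq_right hxy] at this
    have hineq : ∀ n, h2 (as n) ≤ h2 (bs n) := fun n =>
      (hmono2.monotoneOn) (hasT n) (hbsT n) (min_le_max)
    have htendx : Filter.Tendsto (fun n => h2 (as n)) Filter.atTop (nhds (h2 x)) := by
      have hcw : ContinuousWithinAt h2 (Set.Icc (0:ℝ) 1) x := hcont2 x (hCsub hx)
      exact hcw.tendsto.comp (tendsto_nhdsWithin_iff.mpr ⟨hast,
        Filter.Eventually.of_forall fun n => hTsub (hasT n)⟩)
    have htendy : Filter.Tendsto (fun n => h2 (bs n)) Filter.atTop (nhds (h2 y)) := by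
      have hcw : ContinuousWithinAt h2 (Set.Icc (0:ℝ) 1) y := hcont2 y (hCsub hy)
      exact hcw.tendsto.comp (tendsto_nhdsWithin_iff.mpr ⟨hbst,
        Filter.Eventually.of_forall fun n => hTsub (hbsT n)⟩)
    exact le_of_tendsto_of_tendsto' htendx htendy hineq
  -- apply the key lemma on C = Icc c d
  rw [hCIcc] at hcontC hmapC hmonoC
  obtain ⟨p, hpmem, hpfix, htrap⟩ := key_nonrepelling hcd hcontC hmonoC hmapC
  have hp01 : p ∈ Set.Icc (0:ℝ) 1 := hCsub (hCIcc ▸ hpmem)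
  obtain ⟨U, hU, hesc⟩ := hrep (2 * k) (by omega) p hp01 hpfix
  obtain ⟨δ, hδ, hballU⟩ := Metric.mem_nhds_iff.mp hU
  obtain ⟨x, hxmem, hxne, hxδ, horb⟩ := htrap δ hδ
  have hx01 : x ∈ Set.Icc (0:ℝ) 1 := hCsub (hCIcc ▸ hxmem)
  have hxU : x ∈ U := hballU (by rw [Metric.mem_ball, Real.dist_eq]; exact hxδ)
  obtain ⟨mm, hmm⟩ := hesc x ⟨hxU, hx01⟩ hxne
  apply hmm
  apply hballU
  rw [Metric.mem_ball, Real.dist_eq]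
  have horbm := horb mm
  have : |(f^[2 * k])^[mm] x - p| ≤ |x - p| := by
    rcases le_total p x with h | h
    · rw [Set.uIcc_of_le h] at horbm
      rw [abs_of_nonneg (by linarith [horbm.1]), abs_of_nonneg (by linarith)]
      linarith [horbm.2]
    · rw [Set.uIcc_of_ge h] at horbm
      rw [abs_of_nonpos (by linarith [horbm.2]), abs_of_nonpos (by linarith)]
      linarith [horbm.1]
  linarith
/-- If every periodic point of a continuous interval map is topologically repelling,
then any ∞-homterval is wandering: its forward images have pairwise disjoint
interiors.  (Lemma D2.) -/
theorem stmt_5 (f : ℝ → ℝ) (a b : ℝ) (hab : a < b)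
    (hfc : ContinuousOn f (Set.Icc 0 1))
    (hmaps : Set.MapsTo f (Set.Icc 0 1) (Set.Icc 0 1))
    (hI : Set.Icc a b ⊆ Set.Icc (0 : ℝ) 1)
    (hhom : ∀ n : ℕ, Set.InjOn (f^[n]) (Set.Icc a b))
    (hrep : ∀ k : ℕ, 1 ≤ k → ∀ p ∈ Set.Icc (0 : ℝ) 1, f^[k] p = p →
      TopologicallyRepelling f k p) :
    ∀ m n : ℕ, m ≠ n →
      interior (f^[m] '' Set.Icc a b) ∩ interior (f^[n] '' Set.Icc a b) = ∅ := by
  intro m n hmn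
  by_contra hne
  have hnonempty := Set.nonempty_iff_ne_empty.mpr hne
  rcases lt_or_gt_of_ne hmn with h | h
  · exact main_aux f a b hab hfc hmaps hI hhom hrep h hnonempty
  · exact main_aux f a b hab hfc hmaps hI hhom hrep h
      (Set.inter_comm _ _ ▸ hnonempty)
end

section
/- If h : [0,1] → [0,1] is an increasing homeomorphism with h(0)=0, h(1)=1 satisfying the K-quasisymmetry condition, where K ≥ 1, then for all x, y ∈ [0,1], |h(x) − h(y)| ≤ 2·|x − y|^β, where β = log(1 + 1/K)/log 2. -/
-- Halving lemma: each half of an interval has image at most K/(K+1) of the whole image.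
lemma qs_half (h : ℝ → ℝ) (K : ℝ) (hK : 1 ≤ K)
    (hmono : StrictMonoOn h (Set.Icc 0 1))
    (hqs : ∀ x ∈ Set.Icc (0 : ℝ) 1, ∀ y ∈ Set.Icc (0 : ℝ) 1, x < y →
      K⁻¹ ≤ (h ((x + y) / 2) - h x) / (h y - h ((x + y) / 2)) ∧
        (h ((x + y) / 2) - h x) / (h y - h ((x + y) / 2)) ≤ K)
    {a b : ℝ} (ha : a ∈ Set.Icc (0:ℝ) 1) (hb : b ∈ Set.Icc (0:ℝ) 1) (hab : a < b) :
    h ((a+b)/2) - h a ≤ K/(K+1) * (h b - h a) ∧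
      h b - h ((a+b)/2) ≤ K/(K+1) * (h b - h a) := by
  have hK0 : (0:ℝ) < K := lt_of_lt_of_le one_pos hK
  have hK1 : (0:ℝ) < K + 1 := by linarith
  have hm : (a+b)/2 ∈ Set.Icc (0:ℝ) 1 := ⟨by have := ha.1; have := hb.1; linarith,
    by have := ha.2; have := hb.2; linarith⟩
  have hu : 0 < h ((a+b)/2) - h a := sub_pos.2 (hmono ha hm (by linarith))
  have hv : 0 < h b - h ((a+b)/2) := sub_pos.2 (hmono hm hb (by linarith))
  obtain ⟨hl, hr⟩ := hqs a ha b hb hab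
  set u := h ((a+b)/2) - h a with hudef
  set v := h b - h ((a+b)/2) with hvdef
  have huv : u ≤ K * v := by rw [div_le_iff₀ hv] at hr; linarith
  have hvu : v ≤ K * u := by
    rw [le_div_iff₀ hv] at hl
    have hKinv : K * K⁻¹ = 1 := mul_inv_cancel₀ (ne_of_gt hK0)
    have h2 := mul_le_mul_of_nonneg_left hl hK0.le
    rwa [← mul_assoc, hKinv, one_mul] at h2
  have hba : h b - h a = u + v := by rw [hudef, hvdef]; ring
  rw [hba]
  constructor
  · rw [div_mul_eq_mul_div, le_div_iff₀ hK1]; nlinarith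
  · rw [div_mul_eq_mul_div, le_div_iff₀ hK1]; nlinarith

-- Dyadic intervals: image of a level-m dyadic interval has length at most (K/(K+1))^m.
lemma qs_dyadic (h : ℝ → ℝ) (K : ℝ) (hK : 1 ≤ K)
    (hmono : StrictMonoOn h (Set.Icc 0 1))
    (h0 : h 0 = 0) (h1 : h 1 = 1)
    (hqs : ∀ x ∈ Set.Icc (0 : ℝ) 1, ∀ y ∈ Set.Icc (0 : ℝ) 1, x < y →
      K⁻¹ ≤ (h ((x + y) / 2) - h x) / (h y - h ((x + y) / 2)) ∧
        (h ((x + y) / 2) - h x) / (h y - h ((x + y) / 2)) ≤ K) :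
    ∀ m : ℕ, ∀ j : ℕ, j + 1 ≤ 2^m →
      h (((j:ℝ)+1)/2^m) - h ((j:ℝ)/2^m) ≤ (K/(K+1))^m := by
  intro m
  induction m with
  | zero =>
    intro j hj
    have hj0 : j = 0 := by omega
    subst hj0
    norm_num [h0, h1]
  | succ m ih =>
    intro j hj
    have hK0 : (0:ℝ) < K := lt_of_lt_of_le one_pos hK
    have hlam0 : (0:ℝ) ≤ K/(K+1) := by positivity
    have h2m : (0:ℝ) < 2^m := by positivity
    have h2m1 : (0:ℝ) < 2^(m+1) := by positivity
    set j' := j / 2 with hj'def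
    have hj'2 : j' + 1 ≤ 2^m := by
      have h2 : 2^(m+1) = 2 * 2^m := by ring
      omega
    have hj'c : ((j':ℕ):ℝ) + 1 ≤ 2^m := by exact_mod_cast hj'2
    have ha : ((j':ℕ):ℝ)/2^m ∈ Set.Icc (0:ℝ) 1 := by
      constructor
      · positivity
      · rw [div_le_one h2m]; linarith
    have hb : (((j':ℕ):ℝ)+1)/2^m ∈ Set.Icc (0:ℝ) 1 := by
      constructor
      · positivity
      · rw [div_le_one h2m]; linarith
    have hab : ((j':ℕ):ℝ)/2^m < (((j':ℕ):ℝ)+1)/2^m := by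
      rw [div_lt_div_iff₀ h2m h2m]
      nlinarith
    obtain ⟨hL, hR⟩ := qs_half h K hK hmono hqs ha hb hab
    have hIH : h ((((j':ℕ):ℝ)+1)/2^m) - h (((j':ℕ):ℝ)/2^m) ≤ (K/(K+1))^m := ih j' hj'2
    have hmod := Nat.div_add_mod j 2
    rcases Nat.mod_two_eq_zero_or_one j with hr | hr
    · -- j = 2 * j'
      have hjeq : (j:ℝ) = 2 * (j':ℕ) := by
        have : j = 2 * j' := by omega
        exact_mod_cast congrArg (Nat.cast : ℕ → ℝ) this
      have e1 : (j:ℝ)/2^(m+1) = ((j':ℕ):ℝ)/2^m := by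
        rw [hjeq, div_eq_div_iff h2m1.ne' h2m.ne']; ring
      have e2 : ((j:ℝ)+1)/2^(m+1) = (((j':ℕ):ℝ)/2^m + (((j':ℕ):ℝ)+1)/2^m)/2 := by
        rw [hjeq, div_eq_div_iff h2m1.ne' (by positivity)]
        field_simp
        ring
      rw [e1, e2, pow_succ]
      calc h ((((j':ℕ):ℝ)/2^m + (((j':ℕ):ℝ)+1)/2^m)/2) - h (((j':ℕ):ℝ)/2^m)
          ≤ K/(K+1) * (h ((((j':ℕ):ℝ)+1)/2^m) - h (((j':ℕ):ℝ)/2^m)) := hL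
        _ ≤ K/(K+1) * (K/(K+1))^m := mul_le_mul_of_nonneg_left hIH hlam0
        _ = (K/(K+1))^m * (K/(K+1)) := by ring
    · -- j = 2 * j' + 1
      have hjeq : (j:ℝ) = 2 * (j':ℕ) + 1 := by
        have : j = 2 * j' + 1 := by omega
        exact_mod_cast congrArg (Nat.cast : ℕ → ℝ) this
      have e1 : (j:ℝ)/2^(m+1) = (((j':ℕ):ℝ)/2^m + (((j':ℕ):ℝ)+1)/2^m)/2 := by
        rw [hjeq, div_eq_div_iff h2m1.ne' (by positivity)]
        field_simp
        ring
      have e2 : ((j:ℝ)+1)/2^(m+1) = (((j':ℕ):ℝ)+1)/2^m := by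
        rw [hjeq, div_eq_div_iff h2m1.ne' h2m.ne']; ring
      rw [e1, e2, pow_succ]
      calc h ((((j':ℕ):ℝ)+1)/2^m) - h ((((j':ℕ):ℝ)/2^m + (((j':ℕ):ℝ)+1)/2^m)/2)
          ≤ K/(K+1) * (h ((((j':ℕ):ℝ)+1)/2^m) - h (((j':ℕ):ℝ)/2^m)) := hR
        _ ≤ K/(K+1) * (K/(K+1))^m := mul_le_mul_of_nonneg_left hIH hlam0
        _ = (K/(K+1))^m * (K/(K+1)) := by ring

lemma exists_scale (s : ℝ) (n : ℕ) (hs0 : 0 < s) (hs1 : s ≤ (1/2:ℝ)^n) :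
    ∃ m : ℕ, n ≤ m ∧ (1/2:ℝ)^(m+1) < s ∧ s ≤ (1/2:ℝ)^m := by
  have hex : ∃ m : ℕ, (1/2:ℝ)^(m+1) < s := by
    obtain ⟨k, hk⟩ := exists_pow_lt_of_lt_one hs0 (by norm_num : (1/2:ℝ) < 1)
    refine ⟨k, lt_of_le_of_lt ?_ hk⟩
    exact pow_le_pow_of_le_one (by norm_num) (by norm_num) (Nat.le_succ k)
  refine ⟨Nat.find hex, ?_, Nat.find_spec hex, ?_⟩
  · by_contra hc
    push_neg at hc
    have h1 : Nat.find hex + 1 ≤ n := hc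
    have h2 : (1/2:ℝ)^n ≤ (1/2:ℝ)^(Nat.find hex + 1) :=
      pow_le_pow_of_le_one (by norm_num) (by norm_num) h1
    have := Nat.find_spec hex
    linarith
  · rcases Nat.eq_zero_or_pos (Nat.find hex) with hz | hp
    · rw [hz, pow_zero]
      calc s ≤ (1/2:ℝ)^n := hs1
        _ ≤ 1 := pow_le_one₀ (by norm_num) (by norm_num)
    · obtain ⟨l, hl⟩ := Nat.exists_eq_succ_of_ne_zero (Nat.pos_iff_ne_zero.1 hp)
      have := Nat.find_min hex (m := l) (by omega)
      push_neg at this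
      rw [hl]
      simpa using this

lemma lam_rpow (K : ℝ) (hK : 1 ≤ K) (m : ℕ) {s : ℝ} (hs0 : 0 < s)
    (hs : (1/2:ℝ)^m ≤ 2*s) :
    (K/(K+1))^m ≤ (2*s) ^ (Real.log (1 + 1/K) / Real.log 2) := by
  have hK0 : (0:ℝ) < K := by linarith
  set β := Real.log (1 + 1/K) / Real.log 2 with hβdef
  have hlog2 : (0:ℝ) < Real.log 2 := Real.log_pos (by norm_num)
  have h1K : (1:ℝ) ≤ 1 + 1/K := by
    have : (0:ℝ) < 1/K := by positivity
    linarith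
  have hβ0 : 0 ≤ β := div_nonneg (Real.log_nonneg h1K) hlog2.le
  have hbase : (1/2:ℝ) ^ β = K/(K+1) := by
    rw [Real.rpow_def_of_pos (by norm_num : (0:ℝ) < 1/2)]
    have e1 : Real.log (1/2) = -Real.log 2 := by rw [one_div, Real.log_inv]
    have e2 : -Real.log 2 * β = -Real.log (1+1/K) := by
      rw [hβdef]; field_simp
    rw [e1, e2, Real.exp_neg, Real.exp_log (by positivity)]
    rw [show (1:ℝ) + 1/K = (K+1)/K by field_simp, inv_div]
  calc (K/(K+1))^m = (((1/2:ℝ) ^ β))^m := by rw [hbase]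
    _ = ((1/2:ℝ)^m)^β := by
        rw [← Real.rpow_natCast ((1/2:ℝ)^β) m, ← Real.rpow_natCast ((1/2:ℝ)) m,
          ← Real.rpow_mul (by norm_num : (0:ℝ) ≤ 1/2), ← Real.rpow_mul (by norm_num : (0:ℝ) ≤ 1/2),
          mul_comm]
    _ ≤ (2*s)^β := Real.rpow_le_rpow (by positivity) hs hβ0

lemma concav_rpow (β : ℝ) (hβ0 : 0 ≤ β) (hβ1 : β ≤ 1) {a b : ℝ} (ha : 0 ≤ a) (hb : 0 ≤ b) :
    a ^ β + b ^ β ≤ 2 * ((a+b)/2) ^ β := by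
  have hc := Real.concaveOn_rpow hβ0 hβ1
  have h2 := hc.2 (Set.mem_Ici.2 ha) (Set.mem_Ici.2 hb)
    (by norm_num : (0:ℝ) ≤ 1/2) (by norm_num : (0:ℝ) ≤ 1/2) (by norm_num)
  simp only [smul_eq_mul] at h2
  have e : (1/2:ℝ) * a + (1/2:ℝ) * b = (a+b)/2 := by ring
  rw [e] at h2
  linarith

-- An interval whose right endpoint is a level-n dyadic rational and whose length is at most 2⁻ⁿ.
lemma touch_right (h : ℝ → ℝ) (K : ℝ) (hK : 1 ≤ K)
    (hmono : StrictMonoOn h (Set.Icc 0 1))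
    (h0 : h 0 = 0) (h1 : h 1 = 1)
    (hqs : ∀ x ∈ Set.Icc (0 : ℝ) 1, ∀ y ∈ Set.Icc (0 : ℝ) 1, x < y →
      K⁻¹ ≤ (h ((x + y) / 2) - h x) / (h y - h ((x + y) / 2)) ∧
        (h ((x + y) / 2) - h x) / (h y - h ((x + y) / 2)) ≤ K)
    (n j : ℕ) (hj : j ≤ 2^n) {x : ℝ} (hx0 : 0 ≤ x)
    (hxc : x < (j:ℝ)/2^n) (hs : (j:ℝ)/2^n - x ≤ (1/2:ℝ)^n) :
    h ((j:ℝ)/2^n) - h x ≤ (2*((j:ℝ)/2^n - x)) ^ (Real.log (1 + 1/K) / Real.log 2) := by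
  have h2n : (0:ℝ) < 2^n := by positivity
  set c := (j:ℝ)/2^n with hcdef
  have hs0 : 0 < c - x := sub_pos.2 hxc
  obtain ⟨m, hnm, hm1, hm2⟩ := exists_scale (c - x) n hs0 hs
  have h2m : (0:ℝ) < 2^m := by positivity
  set j2 := j * 2^(m-n) with hj2def
  have hpow : 2^(m-n) * 2^n = 2^m := pow_sub_mul_pow 2 hnm
  have hpowR : (2:ℝ)^(m-n) * 2^n = 2^m := by exact_mod_cast congrArg (Nat.cast : ℕ → ℝ) hpow
  have hceq : c = (j2:ℝ)/2^m := by
    rw [hcdef, div_eq_div_iff h2n.ne' h2m.ne', hj2def]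
    push_cast
    rw [← hpowR]
    ring
  have hj1 : 1 ≤ j := by
    by_contra hc
    have hj0 : j = 0 := by omega
    rw [hcdef, hj0] at hs0
    norm_num at hs0
    linarith
  have hj21 : 1 ≤ j2 := by
    have : 1 ≤ 2^(m-n) := Nat.one_le_two_pow
    calc 1 = 1 * 1 := by ring
      _ ≤ j * 2^(m-n) := Nat.mul_le_mul hj1 this
  have hj2le : j2 ≤ 2^m := by
    calc j2 = j * 2^(m-n) := hj2def
      _ ≤ 2^n * 2^(m-n) := Nat.mul_le_mul_right _ hj
      _ = 2^m := by rw [Nat.mul_comm]; exact hpow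
  have hc1 : c ≤ 1 := by
    rw [hcdef, div_le_one h2n]
    exact_mod_cast hj
  have hcast : ((j2-1:ℕ):ℝ) = (j2:ℝ) - 1 := by
    have := Nat.cast_sub (R := ℝ) hj21
    simpa using this
  set d := ((j2:ℝ) - 1)/2^m with hddef
  have hdc : d = c - (1/2:ℝ)^m := by
    rw [hddef, hceq, div_pow, one_pow]; ring
  have hdx : d ≤ x := by rw [hdc]; linarith
  have hd0 : 0 ≤ d := by
    rw [hddef]
    have h1j : (1:ℝ) ≤ (j2:ℝ) := by exact_mod_cast hj21
    exact div_nonneg (by linarith) h2m.le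
  have hxI : x ∈ Set.Icc (0:ℝ) 1 := ⟨hx0, le_trans hxc.le hc1⟩
  have hdI : d ∈ Set.Icc (0:ℝ) 1 := ⟨hd0, le_trans hdx hxI.2⟩
  have hdy := qs_dyadic h K hK hmono h0 h1 hqs m (j2-1) (by omega)
  rw [hcast, show (j2:ℝ) - 1 + 1 = (j2:ℝ) by ring, ← hceq, ← hddef] at hdy
  have hmono' : h d ≤ h x := hmono.monotoneOn hdI hxI hdx
  calc h c - h x ≤ h c - h d := by linarith
    _ ≤ (K/(K+1))^m := hdy
    _ ≤ (2*(c-x)) ^ (Real.log (1 + 1/K) / Real.log 2) := by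
        apply lam_rpow K hK m hs0
        have : (1/2:ℝ)^(m+1) = (1/2:ℝ)^m * (1/2) := pow_succ _ _
        linarith

-- An interval whose left endpoint is a level-n dyadic rational and whose length is at most 2⁻ⁿ.
lemma touch_left (h : ℝ → ℝ) (K : ℝ) (hK : 1 ≤ K)
    (hmono : StrictMonoOn h (Set.Icc 0 1))
    (h0 : h 0 = 0) (h1 : h 1 = 1)
    (hqs : ∀ x ∈ Set.Icc (0 : ℝ) 1, ∀ y ∈ Set.Icc (0 : ℝ) 1, x < y →
      K⁻¹ ≤ (h ((x + y) / 2) - h x) / (h y - h ((x + y) / 2)) ∧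
        (h ((x + y) / 2) - h x) / (h y - h ((x + y) / 2)) ≤ K)
    (n j : ℕ) {y : ℝ} (hy1 : y ≤ 1)
    (hcy : (j:ℝ)/2^n < y) (hs : y - (j:ℝ)/2^n ≤ (1/2:ℝ)^n) :
    h y - h ((j:ℝ)/2^n) ≤ (2*(y - (j:ℝ)/2^n)) ^ (Real.log (1 + 1/K) / Real.log 2) := by
  have h2n : (0:ℝ) < 2^n := by positivity
  set c := (j:ℝ)/2^n with hcdef
  have hs0 : 0 < y - c := sub_pos.2 hcy
  obtain ⟨m, hnm, hm1, hm2⟩ := exists_scale (y - c) n hs0 hs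
  have h2m : (0:ℝ) < 2^m := by positivity
  set j2 := j * 2^(m-n) with hj2def
  have hpow : 2^(m-n) * 2^n = 2^m := pow_sub_mul_pow 2 hnm
  have hpowR : (2:ℝ)^(m-n) * 2^n = 2^m := by exact_mod_cast congrArg (Nat.cast : ℕ → ℝ) hpow
  have hceq : c = (j2:ℝ)/2^m := by
    rw [hcdef, div_eq_div_iff h2n.ne' h2m.ne', hj2def]
    push_cast
    rw [← hpowR]
    ring
  have hc0 : 0 ≤ c := by rw [hcdef]; positivity
  have hc1 : c < 1 := lt_of_lt_of_le hcy hy1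
  have hj2lt : j2 < 2^m := by
    have : (j2:ℝ) < 2^m := by
      rw [hceq, div_lt_one h2m] at hc1
      exact hc1
    exact_mod_cast this
  set d := ((j2:ℝ) + 1)/2^m with hddef
  have hdc : d = c + (1/2:ℝ)^m := by
    rw [hddef, hceq, div_pow, one_pow]; ring
  have hyd : y ≤ d := by rw [hdc]; linarith
  have hd1 : d ≤ 1 := by
    rw [hddef, div_le_one h2m]
    have : (j2:ℝ) + 1 ≤ ((2^m : ℕ) : ℝ) := by exact_mod_cast hj2lt
    push_cast at this
    linarith
  have hyI : y ∈ Set.Icc (0:ℝ) 1 := ⟨le_trans hc0 hcy.le, hy1⟩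
  have hdI : d ∈ Set.Icc (0:ℝ) 1 := ⟨le_trans hyI.1 hyd, hd1⟩
  have hdy := qs_dyadic h K hK hmono h0 h1 hqs m j2 hj2lt
  rw [← hceq, ← hddef] at hdy
  have hmono' : h y ≤ h d := hmono.monotoneOn hyI hdI hyd
  calc h y - h c ≤ h d - h c := by linarith
    _ ≤ (K/(K+1))^m := hdy
    _ ≤ (2*(y-c)) ^ (Real.log (1 + 1/K) / Real.log 2) := by
        apply lam_rpow K hK m hs0
        have : (1/2:ℝ)^(m+1) = (1/2:ℝ)^m * (1/2) := pow_succ _ _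
        linarith

lemma main_aux_s8 (h : ℝ → ℝ) (K : ℝ) (hK : 1 ≤ K)
    (hmono : StrictMonoOn h (Set.Icc 0 1))
    (h0 : h 0 = 0) (h1 : h 1 = 1)
    (hqs : ∀ x ∈ Set.Icc (0 : ℝ) 1, ∀ y ∈ Set.Icc (0 : ℝ) 1, x < y →
      K⁻¹ ≤ (h ((x + y) / 2) - h x) / (h y - h ((x + y) / 2)) ∧
        (h ((x + y) / 2) - h x) / (h y - h ((x + y) / 2)) ≤ K)
    {x y : ℝ} (hx : x ∈ Set.Icc (0:ℝ) 1) (hy : y ∈ Set.Icc (0:ℝ) 1) (hxy : x < y) :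
    h y - h x ≤ 2 * (y - x) ^ (Real.log (1 + 1/K) / Real.log 2) := by
  have hK0 : (0:ℝ) < K := by linarith
  set β := Real.log (1 + 1/K) / Real.log 2 with hβdef
  have hlog2 : (0:ℝ) < Real.log 2 := Real.log_pos (by norm_num)
  have h1K : (1:ℝ) ≤ 1 + 1/K := by
    have : (0:ℝ) < 1/K := by positivity
    linarith
  have hβ0 : 0 ≤ β := div_nonneg (Real.log_nonneg h1K) hlog2.le
  have hβ1 : β ≤ 1 := by
    rw [hβdef, div_le_one hlog2]
    apply Real.log_le_log (by positivity)
    have : 1/K ≤ 1 := by rw [div_le_one hK0]; exact hK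
    linarith
  have hs0 : 0 < y - x := sub_pos.2 hxy
  have hs1 : y - x ≤ 1 := by have := hx.1; have := hy.2; linarith
  obtain ⟨n, -, hn1, hn2⟩ := exists_scale (y - x) 0 hs0 (by simpa using hs1)
  have h2n : (0:ℝ) < 2^n := by positivity
  have hhalf : (1/2:ℝ)^n * 2^n = 1 := by rw [← mul_pow]; norm_num
  have hpows : (1/2:ℝ)^(n+1) = (1/2:ℝ)^n * (1/2) := pow_succ _ _
  -- final conversion (2s)^β ≤ 2 s^β
  have hsplit : (2*(y-x))^β = (2:ℝ)^β * (y-x)^β := Real.mul_rpow (by norm_num) hs0.le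
  have h2β : (2:ℝ)^β ≤ 2 := by
    calc (2:ℝ)^β ≤ (2:ℝ)^(1:ℝ) := Real.rpow_le_rpow_of_exponent_le one_le_two hβ1
      _ = 2 := Real.rpow_one 2
  have hfin : (2*(y-x))^β ≤ 2*(y-x)^β := by
    rw [hsplit]
    exact mul_le_mul_of_nonneg_right h2β (Real.rpow_nonneg hs0.le _)
  -- the dyadic point
  set J : ℤ := ⌈x * 2^n⌉ with hJdef
  have hJ0 : 0 ≤ J := Int.ceil_nonneg (mul_nonneg hx.1 h2n.le)
  set jn : ℕ := J.toNat with hjndef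
  have hjnc : (jn:ℝ) = (J:ℝ) := by
    rw [hjndef]
    exact_mod_cast congrArg (Int.cast : ℤ → ℝ) (Int.toNat_of_nonneg hJ0)
  set c := (jn:ℝ)/2^n with hcdef
  have hxc : x ≤ c := by
    rw [hcdef, le_div_iff₀ h2n, hjnc]
    exact Int.le_ceil _
  have hcx : c < x + (1/2:ℝ)^n := by
    rw [hcdef, div_lt_iff₀ h2n, hjnc]
    have := Int.ceil_lt_add_one (x * 2^n)
    rw [← hJdef] at this
    nlinarith
  rcases le_or_gt y c with hyc | hcy
  · -- [x,y] inside a single level-n dyadic interval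
    have hc0 : 0 < c := lt_of_lt_of_le (lt_of_le_of_lt hx.1 hxy) hyc
    have hjn1 : 1 ≤ jn := by
      by_contra hcon
      have hj0 : jn = 0 := by omega
      rw [hcdef, hj0] at hc0
      norm_num at hc0
    have hjnle : jn ≤ 2^n := by
      have hxb : x ≤ 1 - (y - x) := by have := hy.2; linarith
      have hcb : c < 1 + (1/2:ℝ)^(n+1) := by
        calc c < x + (1/2:ℝ)^n := hcx
          _ ≤ 1 - (y-x) + (1/2:ℝ)^n := by linarith
          _ < 1 + (1/2:ℝ)^(n+1) := by rw [hpows]; linarith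
      have hjR : (jn:ℝ) < 2^n + 1 := by
        rw [hcdef, div_lt_iff₀ h2n] at hcb
        nlinarith
      have : jn < 2^n + 1 := by exact_mod_cast hjR
      omega
    have hc1 : c ≤ 1 := by
      rw [hcdef, div_le_one h2n]
      exact_mod_cast hjnle
    have hcast : ((jn-1:ℕ):ℝ) = (jn:ℝ) - 1 := by
      have := Nat.cast_sub (R := ℝ) hjn1
      simpa using this
    set d := ((jn:ℝ) - 1)/2^n with hddef
    have hdc : d = c - (1/2:ℝ)^n := by
      rw [hddef, hcdef, div_pow, one_pow]; ring
    have hdx : d ≤ x := by rw [hdc]; linarith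
    have hd0 : 0 ≤ d := by
      rw [hddef]
      have h1j : (1:ℝ) ≤ (jn:ℝ) := by exact_mod_cast hjn1
      exact div_nonneg (by linarith) h2n.le
    have hdI : d ∈ Set.Icc (0:ℝ) 1 := ⟨hd0, le_trans hdx hx.2⟩
    have hcI : c ∈ Set.Icc (0:ℝ) 1 := ⟨hc0.le, hc1⟩
    have hdy := qs_dyadic h K hK hmono h0 h1 hqs n (jn-1) (by omega)
    rw [hcast, show (jn:ℝ) - 1 + 1 = (jn:ℝ) by ring, ← hcdef, ← hddef] at hdy
    have hm1 : h y ≤ h c := hmono.monotoneOn hy hcI hyc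
    have hm2 : h d ≤ h x := hmono.monotoneOn hdI hx hdx
    have hlam : (K/(K+1))^n ≤ (2*(y-x))^β := by
      apply lam_rpow K hK n hs0
      linarith
    calc h y - h x ≤ h c - h d := by linarith
      _ ≤ (K/(K+1))^n := hdy
      _ ≤ (2*(y-x))^β := hlam
      _ ≤ 2*(y-x)^β := hfin
  · -- split at c
    have hjnle : jn ≤ 2^n := by
      have : (jn:ℝ) < 2^n := by
        have hcb : c < 1 := lt_of_lt_of_le hcy hy.2
        rw [hcdef, div_lt_one h2n] at hcb
        exact hcb
      have : jn < 2^n := by exact_mod_cast this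
      omega
    have hycs : y - c ≤ (1/2:ℝ)^n := by linarith
    have piece2 : h y - h c ≤ (2*(y - c))^β :=
      touch_left h K hK hmono h0 h1 hqs n jn hy.2 hcy hycs
    rcases eq_or_lt_of_le hxc with heq | hlt
    · rw [← heq] at piece2
      calc h y - h x ≤ (2*(y-x))^β := piece2
        _ ≤ 2*(y-x)^β := hfin
    · have hcxs : c - x ≤ (1/2:ℝ)^n := by linarith
      have piece1 : h c - h x ≤ (2*(c - x))^β :=
        touch_right h K hK hmono h0 h1 hqs n jn hjnle hx.1 hlt hcxs
      have hconc := concav_rpow β hβ0 hβ1 (a := 2*(c-x)) (b := 2*(y-c))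
        (by linarith) (by linarith)
      rw [show ((2*(c-x)) + (2*(y-c)))/2 = y - x by ring] at hconc
      linarith

/-- A `K`-quasisymmetric increasing homeomorphism of `[0,1]` fixing the endpoints is
Hölder continuous with exponent `β = log(1 + 1/K) / log 2`:
`|h x - h y| ≤ 2 |x - y| ^ β`. -/
theorem stmt_8 (h : ℝ → ℝ) (K : ℝ) (hK : 1 ≤ K)
    (hmono : StrictMonoOn h (Set.Icc 0 1))
    (hcont : ContinuousOn h (Set.Icc 0 1))
    (himg : h '' Set.Icc 0 1 = Set.Icc (0 : ℝ) 1)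
    (h0 : h 0 = 0) (h1 : h 1 = 1)
    (hqs : ∀ x ∈ Set.Icc (0 : ℝ) 1, ∀ y ∈ Set.Icc (0 : ℝ) 1, x < y →
      K⁻¹ ≤ (h ((x + y) / 2) - h x) / (h y - h ((x + y) / 2)) ∧
        (h ((x + y) / 2) - h x) / (h y - h ((x + y) / 2)) ≤ K) :
    ∀ x ∈ Set.Icc (0 : ℝ) 1, ∀ y ∈ Set.Icc (0 : ℝ) 1,
      |h x - h y| ≤ 2 * |x - y| ^ (Real.log (1 + 1 / K) / Real.log 2) := by
  intro x hx y hy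
  rcases lt_trichotomy x y with hlt | heq | hgt
  · have hm := main_aux_s8 h K hK hmono h0 h1 hqs hx hy hlt
    have hhm : h x < h y := hmono hx hy hlt
    rw [abs_of_neg (by linarith : h x - h y < 0), abs_of_neg (by linarith : x - y < 0),
      neg_sub, neg_sub]
    exact hm
  · rw [heq]
    simp only [sub_self, abs_zero]
    positivity
  · have hm := main_aux_s8 h K hK hmono h0 h1 hqs hy hx hgt
    have hhm : h y < h x := hmono hy hx hgt
    rw [abs_of_pos (by linarith : 0 < h x - h y), abs_of_pos (by linarith : 0 < x - y)]
    exact hm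
end

section
/- Let f : M → M be C¹ on a compact interval M, let V be a compact subset of M on which |f'| ≥ β > 0, and suppose f' is α-Hölder with constant H on M. If I ⊆ M is an interval such that f^i(I) ⊆ V for 0 ≤ i < n and f^i is injective on I for each i ≤ n, then for all x, y ∈ I: |(f^n)'(x)|/|(f^n)'(y)| ≤ exp((H/β)·Σ_{i=0}^{n−1} |f^i(I)|^α). -/
open MeasureTheory

/-- Length of a subset of `ℝ`. -/
noncomputable def len (s : Set ℝ) : ℝ := (volume s).toReal

/-- The naive distortion lemma: for a `C^{1+α}` map whose derivative is bounded below
on a compact set `V` containing the first `n` images of an interval `I` on which the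
iterates are injective, the distortion of `f^[n]` on `I` is bounded by
`exp ((H/β) Σ |f^i(I)|^α)`. -/
theorem stmt_9 (a b : ℝ) (hab : a ≤ b) (f : ℝ → ℝ) (α H β : ℝ)
    (hα : 0 < α) (hα1 : α ≤ 1) (hH : 0 < H) (hβ : 0 < β)
    (hmaps : Set.MapsTo f (Set.Icc a b) (Set.Icc a b))
    (hdiff : ∀ x ∈ Set.Icc a b, DifferentiableAt ℝ f x)
    (hHolder : ∀ u ∈ Set.Icc a b, ∀ v ∈ Set.Icc a b,
      |deriv f u - deriv f v| ≤ H * |u - v| ^ α)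
    (V : Set ℝ) (hV : IsCompact V) (hVM : V ⊆ Set.Icc a b)
    (hβV : ∀ x ∈ V, β ≤ |deriv f x|)
    (c d : ℝ) (hI : Set.Icc c d ⊆ Set.Icc a b)
    (n : ℕ)
    (hiter : ∀ i < n, f^[i] '' Set.Icc c d ⊆ V)
    (hinj : ∀ i ≤ n, Set.InjOn (f^[i]) (Set.Icc c d)) :
    ∀ x ∈ Set.Icc c d, ∀ y ∈ Set.Icc c d,
      |deriv (f^[n]) x| / |deriv (f^[n]) y| ≤
        Real.exp ((H / β) * ∑ i ∈ Finset.range n, len (f^[i] '' Set.Icc c d) ^ α) := by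
  intro x hx y hy
  have hfc : ContinuousOn f (Set.Icc a b) := fun z hz =>
    (hdiff z hz).continuousAt.continuousWithinAt
  have hmapsI : ∀ i, Set.MapsTo (f^[i]) (Set.Icc c d) (Set.Icc a b) := fun i =>
    (hmaps.iterate i).mono_left hI
  have hcont : ∀ i, ContinuousOn (f^[i]) (Set.Icc c d) := by
    intro i
    induction i with
    | zero => simpa using continuousOn_id
    | succ m ih =>
      rw [Function.iterate_succ']
      exact hfc.comp ih (hmapsI m)
  have hder : ∀ z ∈ Set.Icc c d, ∀ m, m ≤ n →
      HasDerivAt (f^[m]) (∏ i ∈ Finset.range m, deriv f (f^[i] z)) z := by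
    intro z hz m
    induction m with
    | zero => intro _; simpa using hasDerivAt_id z
    | succ m ih =>
      intro hm
      have hm' : m < n := hm
      have h1 := ih hm'.le
      have hzV : f^[m] z ∈ V := hiter m hm' ⟨z, hz, rfl⟩
      have hd2 : HasDerivAt f (deriv f (f^[m] z)) (f^[m] z) :=
        (hdiff _ (hVM hzV)).hasDerivAt
      have h3 := hd2.comp z h1
      rw [Function.iterate_succ', Finset.prod_range_succ, mul_comm]
      exact h3
  have hdx : deriv (f^[n]) x = ∏ i ∈ Finset.range n, deriv f (f^[i] x) :=
    (hder x hx n le_rfl).deriv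
  have hdy : deriv (f^[n]) y = ∏ i ∈ Finset.range n, deriv f (f^[i] y) :=
    (hder y hy n le_rfl).deriv
  rw [hdx, hdy, Finset.abs_prod, Finset.abs_prod]
  have hypos : 0 < ∏ i ∈ Finset.range n, |deriv f (f^[i] y)| := by
    apply Finset.prod_pos
    intro i hi
    exact lt_of_lt_of_le hβ (hβV _ (hiter i (Finset.mem_range.mp hi) ⟨y, hy, rfl⟩))
  rw [div_le_iff₀ hypos, Finset.mul_sum, Real.exp_sum, ← Finset.prod_mul_distrib]
  apply Finset.prod_le_prod (fun i _ => abs_nonneg _)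
  intro i hi
  have hin : i < n := Finset.mem_range.mp hi
  have hxV : f^[i] x ∈ V := hiter i hin ⟨x, hx, rfl⟩
  have hyV : f^[i] y ∈ V := hiter i hin ⟨y, hy, rfl⟩
  set L : ℝ := len (f^[i] '' Set.Icc c d) with hL
  have hLnn : 0 ≤ L := ENNReal.toReal_nonneg
  -- |f^[i] x - f^[i] y| ≤ L
  have hsub : Set.uIcc (f^[i] x) (f^[i] y) ⊆ f^[i] '' Set.Icc c d := by
    have hconn : (f^[i] '' Set.Icc c d).OrdConnected :=
      ((isPreconnected_Icc).image _ (hcont i)).ordConnected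
    exact hconn.uIcc_subset ⟨x, hx, rfl⟩ ⟨y, hy, rfl⟩
  have hfin : volume (f^[i] '' Set.Icc c d) < ⊤ := by
    have : f^[i] '' Set.Icc c d ⊆ Set.Icc a b := by
      rintro _ ⟨z, hz, rfl⟩; exact hVM (hiter i hin ⟨z, hz, rfl⟩)
    calc volume (f^[i] '' Set.Icc c d) ≤ volume (Set.Icc a b) := measure_mono this
    _ < ⊤ := by rw [Real.volume_Icc]; exact ENNReal.ofReal_lt_top
  have hdist : |f^[i] x - f^[i] y| ≤ L := by
    have h1 : volume (Set.uIcc (f^[i] x) (f^[i] y)) ≤ volume (f^[i] '' Set.Icc c d) :=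
      measure_mono hsub
    have h2 := ENNReal.toReal_mono hfin.ne h1
    rw [Set.uIcc, Real.volume_Icc,
      ENNReal.toReal_ofReal (sub_nonneg.mpr (min_le_max)), max_sub_min_eq_abs] at h2
    rwa [abs_sub_comm] at h2
  have hpow : |f^[i] x - f^[i] y| ^ α ≤ L ^ α :=
    Real.rpow_le_rpow (abs_nonneg _) hdist hα.le
  have hHold : |deriv f (f^[i] x) - deriv f (f^[i] y)| ≤ H * |f^[i] x - f^[i] y| ^ α :=
    hHolder _ (hVM hxV) _ (hVM hyV)
  have hβy : β ≤ |deriv f (f^[i] y)| := hβV _ hyV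
  have h1 : |deriv f (f^[i] x)| ≤ |deriv f (f^[i] y)| + H * L ^ α := by
    have := abs_sub_abs_le_abs_sub (deriv f (f^[i] x)) (deriv f (f^[i] y))
    nlinarith [Real.rpow_nonneg (abs_nonneg (f^[i] x - f^[i] y)) α]
  have hLα : 0 ≤ L ^ α := Real.rpow_nonneg hLnn α
  have ht : 0 ≤ H / β * L ^ α := mul_nonneg (div_nonneg hH.le hβ.le) hLα
  have hexp := Real.add_one_le_exp (H / β * L ^ α)
  have hfld : H / β * L ^ α * β = H * L ^ α := by field_simp
  nlinarith [mul_le_mul_of_nonneg_left hβy ht]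
end

section
/- In the setting of the naive distortion lemma, if additionally the intervals I, f(I), …, f^{n−1}(I) have pairwise disjoint interiors and all lie in M = [0,1], and α = 1, then Σ_{i=0}^{n−1}|f^i(I)| ≤ 1, hence |(f^n)'(x)|/|(f^n)'(y)| ≤ exp(H/β) for all x, y ∈ I, with bound independent of n. -/
/-!
Along the orbit segment `I, f(I), …, f^{n-1}(I)` the chain rule writes `(f^n)'` as a product of
values of `f'`, so the logarithmic distortion between `x, y ∈ I` is at most
`∑ |f'(f^i x) - f'(f^i y)| / β ≤ (H/β) ∑ |f^i(I)|`, using `|f'| ≥ β` on `V` and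
`log t ≤ t - 1`.
The intervals `f^i(I)` lie in `[0,1]` and have disjoint interiors; since the boundary of an
interval is Lebesgue-null, their lengths add up to at most `1`.
-/

open MeasureTheory Set Finset Real

open scoped ENNReal

theorem ContinuousOn.iterate_of_image_subset {α : Type*} [TopologicalSpace α] {f : α → α}
    {s t : Set α} {n : ℕ} (hf : ContinuousOn f t) (h : ∀ i < n, f^[i] '' s ⊆ t) :
    ContinuousOn f^[n] s := by
  induction n with
  | zero => exact continuousOn_id
  | succ n ih =>
    rw [Function.iterate_succ']
    exact hf.comp (ih fun i hi => h i (hi.trans n.lt_succ_self))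
      (mapsTo_iff_image_subset.2 (h n n.lt_succ_self))

theorem hasDerivAt_iterate_of_differentiableAt {𝕜 : Type*} [NontriviallyNormedField 𝕜]
    {f : 𝕜 → 𝕜} {x : 𝕜} {n : ℕ} (h : ∀ i < n, DifferentiableAt 𝕜 f (f^[i] x)) :
    HasDerivAt f^[n] (∏ i ∈ range n, deriv f (f^[i] x)) x := by
  induction n with
  | zero => simpa using hasDerivAt_id x
  | succ n ih =>
    have hcomp := (h n n.lt_succ_self).hasDerivAt.comp x
      (ih fun i hi => h i (hi.trans n.lt_succ_self))
    rw [← Function.iterate_succ'] at hcomp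
    rwa [prod_range_succ, mul_comm]

theorem Convex.volume_interior {s : Set ℝ} (hs : Convex ℝ s) :
    volume (interior s) = volume s :=
  measure_interior_of_null_frontier (hs.addHaar_frontier volume)

theorem sum_len_le_len_of_pairwiseDisjoint_interior {ι : Type*} {t : Finset ι}
    {s : ι → Set ℝ} {T : Set ℝ} (hconv : ∀ i ∈ t, Convex ℝ (s i))
    (hsub : ∀ i ∈ t, s i ⊆ T) (hT : volume T ≠ ∞)
    (hdisj : (t : Set ι).PairwiseDisjoint fun i => interior (s i)) :
    ∑ i ∈ t, len (s i) ≤ len T := by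
  have hfin : ∀ i ∈ t, volume (s i) ≠ ∞ := fun i hi =>
    measure_ne_top_of_subset (hsub i hi) hT
  have hvol : ∑ i ∈ t, volume (s i) ≤ volume T :=
    calc ∑ i ∈ t, volume (s i) = ∑ i ∈ t, volume (interior (s i)) :=
          sum_congr rfl fun i hi => ((hconv i hi).volume_interior).symm
      _ = volume (⋃ i ∈ t, interior (s i)) :=
          (measure_biUnion_finset hdisj fun _ _ => isOpen_interior.measurableSet).symm
      _ ≤ volume T :=
          measure_mono (iUnion₂_subset fun i hi => interior_subset.trans (hsub i hi))
  unfold len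
  rw [← ENNReal.toReal_sum hfin]
  exact ENNReal.toReal_mono hT hvol

theorem Set.OrdConnected.abs_sub_le_len {s : Set ℝ} (hs : s.OrdConnected)
    (hfin : volume s ≠ ∞) {x y : ℝ} (hx : x ∈ s) (hy : y ∈ s) : |x - y| ≤ len s := by
  have hvol : volume (uIcc y x) ≤ volume s := measure_mono (hs.uIcc_subset hy hx)
  rw [Real.volume_interval] at hvol
  simpa [len] using ENNReal.toReal_mono hfin hvol

theorem abs_div_abs_le_exp {a b β : ℝ} (hβ : 0 < β) (hb : β ≤ |b|) :
    |a| / |b| ≤ exp (|a - b| / β) :=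
  calc |a| / |b| ≤ (|b| + |a - b|) / |b| := by
        gcongr
        linarith [abs_sub_abs_le_abs_sub a b]
    _ = 1 + |a - b| / |b| := by field_simp [(hβ.trans_le hb).ne']
    _ ≤ 1 + |a - b| / β := by gcongr
    _ ≤ exp (|a - b| / β) := by linarith [add_one_le_exp (|a - b| / β)]

theorem abs_prod_div_abs_prod_le_exp {ι : Type*} {t : Finset ι} {a b : ι → ℝ} {β : ℝ}
    (hβ : 0 < β) (hb : ∀ i ∈ t, β ≤ |b i|) :
    |∏ i ∈ t, a i| / |∏ i ∈ t, b i| ≤ exp ((∑ i ∈ t, |a i - b i|) / β) := by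
  rw [abs_prod, abs_prod, ← prod_div_distrib, sum_div, exp_sum]
  exact prod_le_prod (fun _ _ => by positivity) fun i hi => abs_div_abs_le_exp hβ (hb i hi)

theorem stmt_10_general (f : ℝ → ℝ) (H β : ℝ) (hH : 0 < H) (hβ : 0 < β)
    (hdiff : ∀ x ∈ Set.Icc (0 : ℝ) 1, DifferentiableAt ℝ f x)
    (hLip : ∀ u ∈ Set.Icc (0 : ℝ) 1, ∀ v ∈ Set.Icc (0 : ℝ) 1,
      |deriv f u - deriv f v| ≤ H * |u - v|)
    (V : Set ℝ) (hVM : V ⊆ Set.Icc 0 1)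
    (hβV : ∀ x ∈ V, β ≤ |deriv f x|)
    (c d : ℝ)
    (n : ℕ)
    (hiter : ∀ i < n, f^[i] '' Set.Icc c d ⊆ V)
    (hdisj : ∀ i < n, ∀ j < n, i ≠ j →
      interior (f^[i] '' Set.Icc c d) ∩ interior (f^[j] '' Set.Icc c d) = ∅) :
    (∑ i ∈ Finset.range n, len (f^[i] '' Set.Icc c d)) ≤ 1 ∧
      ∀ x ∈ Set.Icc c d, ∀ y ∈ Set.Icc c d,
        |deriv (f^[n]) x| / |deriv (f^[n]) y| ≤ Real.exp (H / β) := by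
  set J : ℕ → Set ℝ := fun i => f^[i] '' Icc c d
  have hJ01 : ∀ i < n, J i ⊆ Icc 0 1 := fun i hi => (hiter i hi).trans hVM
  have hcont : ContinuousOn f (Icc 0 1) := fun x hx =>
    (hdiff x hx).continuousAt.continuousWithinAt
  have hJconv : ∀ i < n, Convex ℝ (J i) := fun i hi =>
    convex_iff_isPreconnected.2 <| isPreconnected_Icc.image _ <|
      hcont.iterate_of_image_subset fun j hj => hJ01 j (hj.trans hi)
  have hsum : ∑ i ∈ range n, len (J i) ≤ 1 := by
    simpa [len] using sum_len_le_len_of_pairwiseDisjoint_interior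
      (fun i hi => hJconv i (mem_range.1 hi)) (fun i hi => hJ01 i (mem_range.1 hi))
      (by simp) fun i hi j hj hij =>
        disjoint_iff_inter_eq_empty.2 (hdisj i (by simpa using hi) j (by simpa using hj) hij)
  refine ⟨hsum, fun x hx y hy => ?_⟩
  have hderiv (z : ℝ) (hz : z ∈ Icc c d) :
      deriv f^[n] z = ∏ i ∈ range n, deriv f (f^[i] z) :=
    (hasDerivAt_iterate_of_differentiableAt fun i hi => hdiff _ (hJ01 i hi ⟨z, hz, rfl⟩)).deriv
  have hvar : ∑ i ∈ range n, |deriv f (f^[i] x) - deriv f (f^[i] y)| ≤ H :=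
    calc ∑ i ∈ range n, |deriv f (f^[i] x) - deriv f (f^[i] y)|
        ≤ ∑ i ∈ range n, H * len (J i) := sum_le_sum fun i hi => by
          have hi := mem_range.1 hi
          refine (hLip _ (hJ01 i hi ⟨x, hx, rfl⟩) _ (hJ01 i hi ⟨y, hy, rfl⟩)).trans ?_
          refine mul_le_mul_of_nonneg_left ?_ hH.le
          exact (hJconv i hi).ordConnected.abs_sub_le_len
            (measure_ne_top_of_subset (hJ01 i hi) (by simp)) ⟨x, hx, rfl⟩ ⟨y, hy, rfl⟩
      _ = H * ∑ i ∈ range n, len (J i) := (mul_sum _ _ _).symm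
      _ ≤ H := mul_le_of_le_one_right hH.le hsum
  rw [hderiv x hx, hderiv y hy]
  refine (abs_prod_div_abs_prod_le_exp hβ fun i hi => ?_).trans
    (exp_le_exp.2 (div_le_div_of_nonneg_right hvar hβ.le))
  exact hβV _ (hiter i (mem_range.1 hi) ⟨y, hy, rfl⟩)

/-- Naive distortion lemma with pairwise disjoint interiors: since the images of `I`
under `f^[0], …, f^[n-1]` are subintervals of `[0,1]` with pairwise disjoint
interiors, their total length is at most `1` and the distortion of `f^[n]` is at
most `exp (H/β)`, independently of `n`. -/
theorem stmt_10 (f : ℝ → ℝ) (H β : ℝ) (hH : 0 < H) (hβ : 0 < β)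
    (hmaps : Set.MapsTo f (Set.Icc 0 1) (Set.Icc 0 1))
    (hdiff : ∀ x ∈ Set.Icc (0 : ℝ) 1, DifferentiableAt ℝ f x)
    (hLip : ∀ u ∈ Set.Icc (0 : ℝ) 1, ∀ v ∈ Set.Icc (0 : ℝ) 1,
      |deriv f u - deriv f v| ≤ H * |u - v|)
    (V : Set ℝ) (hV : IsCompact V) (hVM : V ⊆ Set.Icc 0 1)
    (hβV : ∀ x ∈ V, β ≤ |deriv f x|)
    (c d : ℝ) (hI : Set.Icc c d ⊆ Set.Icc (0 : ℝ) 1)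
    (n : ℕ)
    (hiter : ∀ i < n, f^[i] '' Set.Icc c d ⊆ V)
    (hinj : ∀ i ≤ n, Set.InjOn (f^[i]) (Set.Icc c d))
    (hdisj : ∀ i < n, ∀ j < n, i ≠ j →
      interior (f^[i] '' Set.Icc c d) ∩ interior (f^[j] '' Set.Icc c d) = ∅) :
    (∑ i ∈ Finset.range n, len (f^[i] '' Set.Icc c d)) ≤ 1 ∧
      ∀ x ∈ Set.Icc c d, ∀ y ∈ Set.Icc c d,
        |deriv (f^[n]) x| / |deriv (f^[n]) y| ≤ Real.exp (H / β) :=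
  stmt_10_general f H β hH hβ hdiff hLip V hVM hβV c d n hiter hdisj
end

section
/- Let h : [0,1] → [0,1] be an increasing homeomorphism. Suppose {η_n} and {η'_n} are sequences of nested finite partitions of [0,1] by closed intervals, both with bounded geometry and bounded nearby geometry with uniform constant C > 0 and exponentially decaying mesh, such that h maps each interval of η_n onto an interval of η'_n for every n. Then h is quasisymmetric: there is K = K(C) such that K⁻¹ ≤ (h(z)−h(x))/(h(y)−h(z)) ≤ K whenever z is the midpoint of [x,y]. -/
/-!
Fix `p < q` in `[0, 1]` with `t = q - p` small and let `w` be the midpoint. Zooming in on `w`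
through the partitions gives an interval `R ∋ w` of length between `3t / (2C)` and
`3t / (2C²)`, and inside it a descendant `J ∋ w` of length between `Ct / 2` and `t / 2`, so
`J ⊆ [p, q]`. By bounded nearby geometry, `R` and its two neighbours cover the tripled interval
`[2p - q, 2q - p]`, and their images have lengths comparable to `|h R|`. Every proper refinement
step shrinks lengths by the factor `1 - C` and image lengths by at most `C`; as `|J| / |R|` is
bounded below, the number of proper steps from `R` to `J` is bounded, hence `|h J| ≳ |h R|`.
So the `h`-increment over the tripled interval is at most a constant times `h q - h p`.
Long intervals are handled by compactness, and the midpoint bounds follow by applying this to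
`[x, z]` and to `[z, y]`.
-/

open MeasureTheory

open Set Filter

theorem len_Icc {c d : ℝ} (hcd : c ≤ d) : len (Icc c d) = d - c :=
  Real.volume_real_Icc_of_le hcd

theorem le_or_le_of_Ioo_inter_Ioo_eq_empty {a b c d : ℝ} (hab : a < b) (hcd : c < d)
    (h : Ioo a b ∩ Ioo c d = ∅) : b ≤ c ∨ d ≤ a := by
  rw [← disjoint_iff_inter_eq_empty, Ioo_disjoint_Ioo] at h
  by_contra! hlt
  exact h.not_gt (lt_min (max_lt hab hlt.1) (max_lt hlt.2 hcd))

theorem MonotoneOn.image_Icc_eq {h : ℝ → ℝ} {s : Set ℝ} (hmono : MonotoneOn h s)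
    (hcont : ContinuousOn h s) {c d : ℝ} (hcd : c ≤ d) (hsub : Icc c d ⊆ s) :
    h '' Icc c d = Icc (h c) (h d) :=
  (hcont.mono hsub).image_Icc_of_monotoneOn hcd (hmono.mono hsub)

theorem MonotoneOn.len_image_Icc {h : ℝ → ℝ} {s : Set ℝ} (hmono : MonotoneOn h s)
    (hcont : ContinuousOn h s) {c d : ℝ} (hcd : c ≤ d) (hsub : Icc c d ⊆ s) :
    len (h '' Icc c d) = h d - h c := by
  rw [hmono.image_Icc_eq hcont hcd hsub,
    len_Icc (hmono (hsub (left_mem_Icc.2 hcd)) (hsub (right_mem_Icc.2 hcd)) hcd)]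

theorem exists_pos_le_pow_of_le_one_sub_pow {C κ : ℝ} (hC : 0 < C) (hC1 : C ≤ 1) (hκ : 0 < κ) :
    ∃ D > 0, ∀ m : ℕ, κ ≤ (1 - C) ^ m → D ≤ C ^ m := by
  obtain ⟨M, hM⟩ := exists_pow_lt_of_lt_one hκ (by linarith : 1 - C < 1)
  refine ⟨C ^ M, pow_pos hC M, fun m hm => pow_le_pow_of_le_one hC.le hC1 ?_⟩
  by_contra! hMm
  have := pow_le_pow_of_le_one (by linarith : (0 : ℝ) ≤ 1 - C) (by linarith) hMm.le
  linarith

theorem IsCompact.exists_pos_le_sub_of_le_sub {f : ℝ → ℝ} {s : Set ℝ} (hs : IsCompact s)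
    (hmono : StrictMonoOn f s) (hcont : ContinuousOn f s) {δ : ℝ} (hδ : 0 < δ) :
    ∃ ε > 0, ∀ u ∈ s, ∀ v ∈ s, δ ≤ v - u → ε ≤ f v - f u := by
  set S := s ×ˢ s ∩ {x : ℝ × ℝ | δ ≤ x.2 - x.1}
  have hS : IsCompact S :=
    (hs.prod hs).inter_right (isClosed_le continuous_const (continuous_snd.sub continuous_fst))
  rcases S.eq_empty_or_nonempty with hempty | hne
  · refine ⟨1, one_pos, fun u hu v hv huv => ?_⟩
    have huvS : (u, v) ∈ S := ⟨⟨hu, hv⟩, huv⟩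
    rw [hempty] at huvS
    exact huvS.elim
  have hcontS : ContinuousOn (fun x : ℝ × ℝ => f x.2 - f x.1) S :=
    (hcont.comp continuous_snd.continuousOn fun x hx => hx.1.2).sub
      (hcont.comp continuous_fst.continuousOn fun x hx => hx.1.1)
  obtain ⟨x, ⟨⟨hx₁, hx₂⟩, hx⟩, hmin⟩ := hS.exists_isMinOn hne hcontS
  have hx' : δ ≤ x.2 - x.1 := hx
  exact ⟨f x.2 - f x.1, sub_pos.2 (hmono hx₁ hx₂ (by linarith)),
    fun u hu v hv huv => isMinOn_iff.1 hmin (u, v) ⟨⟨hu, hv⟩, huv⟩⟩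

theorem eventually_forall_len_le {η : ℕ → Finset (Set ℝ)} {L μ : ℝ} (hμ0 : 0 ≤ μ) (hμ1 : μ < 1)
    (hmesh : ∀ n, ∀ I ∈ η n, len I ≤ L * μ ^ n) {ε : ℝ} (hε : 0 < ε) :
    ∀ᶠ n in atTop, ∀ I ∈ η n, len I ≤ ε := by
  have hlim := (tendsto_pow_atTop_nhds_zero_of_lt_one hμ0 hμ1).const_mul L
  rw [mul_zero] at hlim
  filter_upwards [hlim.eventually (ge_mem_nhds hε)] with n hn I hI using (hmesh n I hI).trans hn

structure IsNestedPartition (η : ℕ → Finset (Set ℝ)) : Prop where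
  exists_Icc : ∀ n, ∀ I ∈ η n, ∃ c d : ℝ, c < d ∧ I = Icc c d
  iUnion_eq : ∀ n, 1 ≤ n → ⋃ I ∈ η n, I = Icc (0 : ℝ) 1
  interior_inter_interior : ∀ n, ∀ I ∈ η n, ∀ J ∈ η n, I ≠ J → interior I ∩ interior J = ∅
  exists_superset : ∀ n, ∀ J ∈ η (n + 1), ∃ I ∈ η n, J ⊆ I

def HasBoundedGeometry (η : ℕ → Finset (Set ℝ)) (C : ℝ) : Prop :=
  ∀ n, ∀ J ∈ η (n + 1), ∀ I ∈ η n, J ⊆ I → C * len I ≤ len J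

def HasBoundedNearbyGeometry (η : ℕ → Finset (Set ℝ)) (C : ℝ) : Prop :=
  ∀ n, ∀ I ∈ η n, ∀ J ∈ η n, I ≠ J → (I ∩ J).Nonempty → C * len I ≤ len J

-- `[2 * p - q, 2 * q - p]` is `[p, q]` tripled about its midpoint.
def TriplingBound (h : ℝ → ℝ) (K δ : ℝ) : Prop :=
  ∀ p ∈ Icc (0 : ℝ) 1, ∀ q ∈ Icc (0 : ℝ) 1, p < q → q - p ≤ δ →
    ∀ u ∈ Icc (0 : ℝ) 1, ∀ v ∈ Icc (0 : ℝ) 1, 2 * p - q ≤ u → v ≤ 2 * q - p →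
      h v - h u ≤ K * (h q - h p)

theorem HasBoundedNearbyGeometry.mul_sub_le_sub {η : ℕ → Finset (Set ℝ)} {C : ℝ}
    (hnbg : HasBoundedNearbyGeometry η C) {n : ℕ} {x y z : ℝ} (hL : Icc x y ∈ η n)
    (hR : Icc y z ∈ η n) (hxy : x < y) (hyz : y < z) :
    C * (y - x) ≤ z - y ∧ C * (z - y) ≤ y - x := by
  have hne : Icc x y ≠ Icc y z := fun h => hxy.ne ((Icc_eq_Icc_iff hxy.le).1 h).1
  have hmeet : (Icc x y ∩ Icc y z).Nonempty := ⟨y, ⟨hxy.le, le_rfl⟩, le_rfl, hyz.le⟩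
  have h₁ := hnbg n _ hL _ hR hne hmeet
  have h₂ := hnbg n _ hR _ hL hne.symm (inter_comm (Icc x y) _ ▸ hmeet)
  rw [len_Icc hxy.le, len_Icc hyz.le] at h₁ h₂
  exact ⟨h₁, h₂⟩

namespace IsNestedPartition

variable {η η' : ℕ → Finset (Set ℝ)} {h : ℝ → ℝ} {C : ℝ} {m n p q : ℕ} {A I J P : Set ℝ}
  {a b u w x : ℝ}

theorem subset_Icc (hη : IsNestedPartition η) (hn : 1 ≤ n) (hI : I ∈ η n) :
    I ⊆ Icc 0 1 :=
  hη.iUnion_eq n hn ▸ subset_biUnion_of_mem (u := id) hI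

theorem exists_mem (hη : IsNestedPartition η) (hn : 1 ≤ n) (hx : x ∈ Icc (0 : ℝ) 1) :
    ∃ I ∈ η n, x ∈ I := by
  rw [← hη.iUnion_eq n hn] at hx
  simpa using hx

theorem isClosed (hη : IsNestedPartition η) (hI : I ∈ η n) : IsClosed I := by
  obtain ⟨c, d, -, rfl⟩ := hη.exists_Icc n I hI
  exact isClosed_Icc

theorem len_pos (hη : IsNestedPartition η) (hI : I ∈ η n) : 0 < len I := by
  obtain ⟨c, d, hcd, rfl⟩ := hη.exists_Icc n I hI
  rw [len_Icc hcd.le]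
  linarith

theorem len_le_len (hη : IsNestedPartition η) (hI : I ∈ η n) (hJI : J ⊆ I) : len J ≤ len I := by
  obtain ⟨c, d, -, rfl⟩ := hη.exists_Icc n I hI
  exact measureReal_mono hJI measure_Icc_lt_top.ne

theorem closure_interior (hη : IsNestedPartition η) (hI : I ∈ η n) : closure (interior I) = I := by
  obtain ⟨c, d, hcd, rfl⟩ := hη.exists_Icc n I hI
  exact closure_interior_Icc hcd.ne

theorem interior_nonempty (hη : IsNestedPartition η) (hI : I ∈ η n) : (interior I).Nonempty := by
  obtain ⟨c, d, hcd, rfl⟩ := hη.exists_Icc n I hI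
  simpa using hcd

theorem eq_of_mem_of_mem_interior (hη : IsNestedPartition η) (hI : I ∈ η n) (hJ : J ∈ η n)
    (hxI : x ∈ I) (hxJ : x ∈ interior J) : I = J := by
  by_contra hne
  rw [← hη.closure_interior hI] at hxI
  obtain ⟨y, hyJ, hyI⟩ := mem_closure_iff.1 hxI _ isOpen_interior hxJ
  exact (hη.interior_inter_interior n I hI J hJ hne).subset ⟨hyI, hyJ⟩

theorem eq_of_subset (hη : IsNestedPartition η) (hI : I ∈ η n) (hJ : J ∈ η n) (hJI : J ⊆ I) :
    J = I :=
  let ⟨_, hx⟩ := hη.interior_nonempty hJ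
  hη.eq_of_mem_of_mem_interior hJ hI (interior_subset hx) (interior_mono hJI hx)

theorem subset_of_mem_of_mem_interior (hη : IsNestedPartition η) (hpq : p ≤ q) (hI : I ∈ η p)
    (hJ : J ∈ η q) (hxJ : x ∈ J) (hxI : x ∈ interior I) : J ⊆ I := by
  induction q, hpq using Nat.le_induction generalizing J with
  | base => exact (hη.eq_of_mem_of_mem_interior hJ hI hxJ hxI).subset
  | succ q _ ih =>
    obtain ⟨P, hP, hJP⟩ := hη.exists_superset q J hJ
    exact hJP.trans (ih hP (hJP hxJ))

theorem subset_of_subset_inter (hη : IsNestedPartition η) (hpq : p ≤ q) (hI : I ∈ η p)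
    (hP : P ∈ η q) (hJ : J ∈ η m) (hJPI : J ⊆ P ∩ I) : P ⊆ I :=
  let ⟨_, hx⟩ := hη.interior_nonempty hJ
  hη.subset_of_mem_of_mem_interior hpq hI hP (hJPI (interior_subset hx)).1
    (interior_mono (hJPI.trans inter_subset_right) hx)

theorem exists_mem_inter_of_mem_closure (hη : IsNestedPartition η) (hn : 1 ≤ n) {s : Set ℝ}
    (hs : s ⊆ Icc 0 1) (hx : x ∈ closure s) : ∃ J ∈ η n, x ∈ J ∧ (J ∩ s).Nonempty := by
  have hs' : s = ⋃ J ∈ η n, J ∩ s := by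
    rw [← iUnion₂_inter, hη.iUnion_eq n hn, inter_eq_right.2 hs]
  rw [hs', Finset.closure_biUnion, mem_iUnion₂] at hx
  obtain ⟨J, hJ, hxJ⟩ := hx
  exact ⟨J, hJ, closure_minimal inter_subset_left (hη.isClosed hJ) hxJ,
    closure_nonempty_iff.1 ⟨x, hxJ⟩⟩

theorem exists_child (hη : IsNestedPartition η) (hp : 1 ≤ p) (hI : I ∈ η p) (hx : x ∈ I) :
    ∃ J ∈ η (p + 1), x ∈ J ∧ J ⊆ I := by
  rw [← hη.closure_interior hI] at hx
  obtain ⟨J, hJ, hxJ, y, hyJ, hyI⟩ := hη.exists_mem_inter_of_mem_closure (Nat.le_succ_of_le hp)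
    (interior_subset.trans (hη.subset_Icc hp hI)) hx
  exact ⟨J, hJ, hxJ, hη.subset_of_mem_of_mem_interior p.le_succ hI hJ hyJ hyI⟩

theorem exists_descendant (hη : IsNestedPartition η) (hp : 1 ≤ p) (hI : I ∈ η p) (hx : x ∈ I)
    (hpq : p ≤ q) : ∃ J ∈ η q, x ∈ J ∧ J ⊆ I := by
  induction q, hpq using Nat.le_induction with
  | base => exact ⟨I, hI, hx, subset_rfl⟩
  | succ q hpq ih =>
    obtain ⟨J, hJ, hxJ, hJI⟩ := ih
    obtain ⟨K, hK, hxK, hKJ⟩ := hη.exists_child (hp.trans hpq) hJ hxJ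
    exact ⟨K, hK, hxK, hKJ.trans hJI⟩

theorem len_add_len_le (hη : IsNestedPartition η) (hI : I ∈ η n) (hJ : J ∈ η n) (hIJ : I ≠ J)
    (hA : A ∈ η m) (hIA : I ⊆ A) (hJA : J ⊆ A) : len I + len J ≤ len A := by
  have hdisj := hη.interior_inter_interior n I hI J hJ hIJ
  obtain ⟨a, b, hab, rfl⟩ := hη.exists_Icc n I hI
  obtain ⟨c, d, hcd, rfl⟩ := hη.exists_Icc n J hJ
  obtain ⟨e, f, hef, rfl⟩ := hη.exists_Icc m A hA
  rw [interior_Icc, interior_Icc] at hdisj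
  rw [Icc_subset_Icc_iff hab.le] at hIA
  rw [Icc_subset_Icc_iff hcd.le] at hJA
  rw [len_Icc hab.le, len_Icc hcd.le, len_Icc hef.le]
  rcases le_or_le_of_Ioo_inter_Ioo_eq_empty hab hcd hdisj with h | h <;> linarith

theorem _root_.HasBoundedGeometry.le_one (hbg : HasBoundedGeometry η C)
    (hη : IsNestedPartition η) :
    C ≤ 1 := by
  obtain ⟨J, hJ, -⟩ := hη.exists_mem (n := 2) (by norm_num) (x := 0) (by simp)
  obtain ⟨I, hI, hJI⟩ := hη.exists_superset 1 J hJ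
  have hI_pos := hη.len_pos hI
  have := (hbg 1 J hJ I hI hJI).trans (hη.len_le_len hI hJI)
  nlinarith

theorem len_le_one_sub_mul (hη : IsNestedPartition η) (hbg : HasBoundedGeometry η C)
    (hp : 1 ≤ p) (hA : A ∈ η p) (hI : I ∈ η (p + 1)) (hIA : I ⊆ A) (hne : I ≠ A) :
    len I ≤ (1 - C) * len A := by
  -- The child of `A` through a point of `interior A \ I` is a second child, of length
  -- at least `C * len A`.
  obtain ⟨x, hxA, hxI⟩ : ∃ x ∈ interior A, x ∉ I := by
    by_contra! h
    exact hne (hIA.antisymm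
      (hη.closure_interior hA ▸ closure_minimal (fun x hx => h x hx) (hη.isClosed hI)))
  obtain ⟨J, hJ, hxJ⟩ :=
    hη.exists_mem (n := p + 1) (by omega) (hη.subset_Icc hp hA (interior_subset hxA))
  have hJA := hη.subset_of_mem_of_mem_interior p.le_succ hA hJ hxJ hxA
  have hJI : J ≠ I := fun h => hxI (h ▸ hxJ)
  have := hη.len_add_len_le hJ hI hJI hA hJA hIA
  have := hbg p J hJ A hA hJA
  linarith

theorem exists_left_adjacent (hη : IsNestedPartition η) (hn : 1 ≤ n) (hI : Icc a b ∈ η n)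
    (hab : a < b) (ha : 0 < a) : ∃ c < a, Icc c a ∈ η n := by
  have ha1 : a ≤ 1 := (hη.subset_Icc hn hI ⟨le_rfl, hab.le⟩).2
  obtain ⟨J, hJ, haJ, y, hyJ, hy⟩ := hη.exists_mem_inter_of_mem_closure hn (s := Ico 0 a)
    (fun y hy => ⟨hy.1, hy.2.le.trans ha1⟩) (by rw [closure_Ico ha.ne]; exact ⟨ha.le, le_rfl⟩)
  obtain ⟨c, d, hcd, rfl⟩ := hη.exists_Icc n J hJ
  have hca : c < a := hyJ.1.trans_lt hy.2
  have hne : Icc c d ≠ Icc a b := fun h => hca.ne ((Icc_eq_Icc_iff hcd.le).1 h).1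
  have hdisj := hη.interior_inter_interior n _ hJ _ hI hne
  rw [interior_Icc, interior_Icc] at hdisj
  have hda : d ≤ a := (le_or_le_of_Ioo_inter_Ioo_eq_empty hcd hab hdisj).resolve_right (by linarith)
  exact ⟨c, hca, le_antisymm hda haJ.2 ▸ hJ⟩

theorem exists_right_adjacent (hη : IsNestedPartition η) (hn : 1 ≤ n) (hI : Icc a b ∈ η n)
    (hab : a < b) (hb : b < 1) : ∃ d > b, Icc b d ∈ η n := by
  have hb0 : 0 ≤ b := (hη.subset_Icc hn hI ⟨hab.le, le_rfl⟩).1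
  obtain ⟨J, hJ, hbJ, y, hyJ, hy⟩ := hη.exists_mem_inter_of_mem_closure hn (s := Ioc b 1)
    (fun y hy => ⟨hb0.trans hy.1.le, hy.2⟩) (by rw [closure_Ioc hb.ne]; exact ⟨le_rfl, hb.le⟩)
  obtain ⟨c, d, hcd, rfl⟩ := hη.exists_Icc n J hJ
  have hbd : b < d := hy.1.trans_le hyJ.2
  have hne : Icc c d ≠ Icc a b := fun h => hbd.ne' ((Icc_eq_Icc_iff hcd.le).1 h).2
  have hdisj := hη.interior_inter_interior n _ hJ _ hI hne
  rw [interior_Icc, interior_Icc] at hdisj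
  have hbc : b ≤ c := (le_or_le_of_Ioo_inter_Ioo_eq_empty hcd hab hdisj).resolve_left (by linarith)
  exact ⟨d, hbd, le_antisymm hbJ.1 hbc ▸ hJ⟩

theorem exists_zoom (hη : IsNestedPartition η) (hC : 0 ≤ C) (hbg : HasBoundedGeometry η C)
    (hmesh : ∀ ε > 0, ∀ᶠ n in atTop, ∀ I ∈ η n, len I ≤ ε) (hp : 1 ≤ p) (hI : I ∈ η p)
    (hw : w ∈ I) {ℓ : ℝ} (hℓ : 0 < ℓ) (hℓI : ℓ < len I) :
    ∃ q, p ≤ q ∧ ∃ J ∈ η q, w ∈ J ∧ J ⊆ I ∧ C * ℓ ≤ len J ∧ len J ≤ ℓ := by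
  classical
  have hex : ∃ q, p ≤ q ∧ ∃ J ∈ η q, w ∈ J ∧ J ⊆ I ∧ len J ≤ ℓ := by
    obtain ⟨q, hq, hpq⟩ := ((hmesh ℓ hℓ).and (eventually_ge_atTop p)).exists
    obtain ⟨J, hJ, hwJ, hJI⟩ := hη.exists_descendant hp hI hw hpq
    exact ⟨q, hpq, J, hJ, hwJ, hJI, hq J hJ⟩
  -- `J` is taken at the first level where it exists, so its parent is longer than `ℓ`.
  obtain ⟨hpq, J, hJ, hwJ, hJI, hJℓ⟩ := Nat.find_spec hex
  have hpq' : p ≠ Nat.find hex := by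
    rintro hq
    rw [← hq] at hJ
    rw [← hη.eq_of_subset hI hJ hJI] at hℓI
    linarith
  obtain ⟨q, hq⟩ : ∃ q, Nat.find hex = q + 1 := ⟨Nat.find hex - 1, by omega⟩
  rw [hq] at hJ hpq hpq'
  obtain ⟨P, hP, hJP⟩ := hη.exists_superset q J hJ
  have hPI := hη.subset_of_subset_inter (by omega) hI hP hJ (subset_inter hJP hJI)
  have hPℓ : ℓ < len P := by
    by_contra! hPℓ
    exact Nat.find_min hex (by omega) ⟨by omega, P, hP, hJP hwJ, hPI, hPℓ⟩
  refine ⟨q + 1, hpq, J, hJ, hwJ, hJI, ?_, hJℓ⟩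
  exact (mul_le_mul_of_nonneg_left hPℓ.le hC).trans (hbg q J hJ P hP hJP)

theorem exists_pos_le_len (hη : IsNestedPartition η) (n : ℕ) :
    ∃ m > 0, ∀ I ∈ η n, m ≤ len I := by
  rcases (η n).eq_empty_or_nonempty with hempty | hne
  · exact ⟨1, one_pos, by simp [hempty]⟩
  obtain ⟨I₀, hI₀, hmin⟩ := (η n).exists_min_image len hne
  exact ⟨len I₀, hη.len_pos hI₀, hmin⟩

theorem exists_nested_pair (hη : IsNestedPartition η) (hC : 0 < C) (hbg : HasBoundedGeometry η C)
    (hmesh : ∀ ε > 0, ∀ᶠ n in atTop, ∀ I ∈ η n, len I ≤ ε) (hp : 1 ≤ p) (hI : I ∈ η p)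
    (hw : w ∈ I) {t : ℝ} (ht : 0 < t) (htI : 3 * t < 2 * C ^ 2 * len I) :
    ∃ r, 1 ≤ r ∧ ∃ R ∈ η r, ∃ j, r ≤ j ∧ ∃ J ∈ η j, w ∈ J ∧ J ⊆ R ∧
      3 * t ≤ 2 * C * len R ∧ C ^ 3 * len R ≤ 3 * len J ∧ 2 * len J ≤ t := by
  have hC1 := hbg.le_one hη
  set ℓ := 3 * t / (2 * C ^ 2) with hℓ
  have hCℓ : C ^ 2 * ℓ = 3 * t / 2 := by rw [hℓ]; field_simp
  obtain ⟨r, hpr, R, hR, hwR, -, hRlow, hRup⟩ := hη.exists_zoom hC.le hbg hmesh hp hI hw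
    (ℓ := ℓ) (by positivity) (by nlinarith)
  obtain ⟨j, hrj, J, hJ, hwJ, hJR, hJlow, hJup⟩ := hη.exists_zoom hC.le hbg hmesh (hp.trans hpr)
    hR hwR (ℓ := t / 2) (by positivity) (by nlinarith)
  refine ⟨r, hp.trans hpr, R, hR, j, hrj, J, hJ, hwJ, hJR, by nlinarith, ?_, by linarith⟩
  calc C ^ 3 * len R ≤ C ^ 3 * ℓ := by gcongr
    _ = 3 * (C * (t / 2)) := by rw [pow_succ', mul_assoc, hCℓ]; ring
    _ ≤ 3 * len J := by linarith

theorem exists_pow_len_le (hη : IsNestedPartition η) (hC : 0 ≤ C) (hC1 : C ≤ 1)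
    (hbg : HasBoundedGeometry η C) (hbg' : HasBoundedGeometry η' C)
    (hresp : ∀ n, ∀ I ∈ η n, h '' I ∈ η' n) (hp : 1 ≤ p) (hpq : p ≤ q) (hI : I ∈ η p)
    (hJ : J ∈ η q) (hJI : J ⊆ I) :
    ∃ m : ℕ, len J ≤ (1 - C) ^ m * len I ∧ C ^ m * len (h '' I) ≤ len (h '' J) := by
  induction q, hpq using Nat.le_induction generalizing J with
  | base => exact ⟨0, by simp [hη.eq_of_subset hI hJ hJI]⟩
  | succ q hpq ih =>
    obtain ⟨P, hP, hJP⟩ := hη.exists_superset q J hJ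
    obtain ⟨m, hlen, himg⟩ := ih hP (hη.subset_of_subset_inter hpq hI hP hJ (subset_inter hJP hJI))
    by_cases hJP' : J = P
    · exact ⟨m, hJP' ▸ hlen, hJP' ▸ himg⟩
    refine ⟨m + 1, ?_, ?_⟩
    · calc len J ≤ (1 - C) * len P := hη.len_le_one_sub_mul hbg (hp.trans hpq) hP hJ hJP hJP'
        _ ≤ (1 - C) * ((1 - C) ^ m * len I) := by gcongr
        _ = (1 - C) ^ (m + 1) * len I := by ring
    · calc C ^ (m + 1) * len (h '' I) = C * (C ^ m * len (h '' I)) := by ring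
        _ ≤ C * len (h '' P) := by gcongr
        _ ≤ len (h '' J) := hbg' q _ (hresp _ _ hJ) _ (hresp _ _ hP) (image_mono hJP)

theorem exists_mul_len_image_le (hη : IsNestedPartition η) (hC : 0 < C)
    (hbg : HasBoundedGeometry η C) (hbg' : HasBoundedGeometry η' C)
    (hresp : ∀ n, ∀ I ∈ η n, h '' I ∈ η' n) {κ : ℝ} (hκ : 0 < κ) :
    ∃ D > 0, ∀ p q I J, 1 ≤ p → p ≤ q → I ∈ η p → J ∈ η q → J ⊆ I →
      κ * len I ≤ len J → D * len (h '' I) ≤ len (h '' J) := by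
  have hC1 := hbg.le_one hη
  obtain ⟨D, hD, hDpow⟩ := exists_pos_le_pow_of_le_one_sub_pow hC hC1 hκ
  refine ⟨D, hD, fun p q I J hp hpq hI hJ hJI hκJ => ?_⟩
  obtain ⟨m, hlen, himg⟩ := hη.exists_pow_len_le hC.le hC1 hbg hbg' hresp hp hpq hI hJ hJI
  have hκm : κ ≤ (1 - C) ^ m := le_of_mul_le_mul_right (hκJ.trans hlen) (hη.len_pos hI)
  exact (mul_le_mul_of_nonneg_right (hDpow m hκm) measureReal_nonneg).trans himg

theorem mul_sub_le_sub_of_ge_left (hη : IsNestedPartition η) (hmono : StrictMonoOn h (Icc 0 1))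
    (hcont : ContinuousOn h (Icc 0 1)) (hC : 0 ≤ C) (hnbg : HasBoundedNearbyGeometry η C)
    (hnbg' : HasBoundedNearbyGeometry η' C) (hresp : ∀ n, ∀ I ∈ η n, h '' I ∈ η' n)
    (hn : 1 ≤ n) (hI : Icc a b ∈ η n) (hab : a < b) (hu : u ∈ Icc (0 : ℝ) 1)
    (hau : a - C * (b - a) ≤ u) : C * (h a - h u) ≤ h b - h a := by
  have hIsub := hη.subset_Icc hn hI
  have hhab : h a < h b := hmono (hIsub ⟨le_rfl, hab.le⟩) (hIsub ⟨hab.le, le_rfl⟩) hab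
  rcases le_or_gt a u with hau' | hua
  · have := hmono.monotoneOn (hIsub ⟨le_rfl, hab.le⟩) hu hau'
    nlinarith
  obtain ⟨c, hca, hL⟩ := hη.exists_left_adjacent hn hI hab (hu.1.trans_lt hua)
  have hLsub := hη.subset_Icc hn hL
  have hhca : h c < h a := hmono (hLsub ⟨le_rfl, hca.le⟩) (hLsub ⟨hca.le, le_rfl⟩) hca
  have himL := hresp n _ hL
  have himI := hresp n _ hI
  rw [hmono.monotoneOn.image_Icc_eq hcont hca.le hLsub] at himL
  rw [hmono.monotoneOn.image_Icc_eq hcont hab.le hIsub] at himI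
  have hcu : c ≤ u := by linarith [(hnbg.mul_sub_le_sub hL hI hca hab).2]
  have hhcu : h c ≤ h u := hmono.monotoneOn (hLsub ⟨le_rfl, hca.le⟩) hu hcu
  calc C * (h a - h u) ≤ C * (h a - h c) := by gcongr
    _ ≤ h b - h a := (hnbg'.mul_sub_le_sub himL himI hhca hhab).1

theorem mul_sub_le_sub_of_le_right (hη : IsNestedPartition η) (hmono : StrictMonoOn h (Icc 0 1))
    (hcont : ContinuousOn h (Icc 0 1)) (hC : 0 ≤ C) (hnbg : HasBoundedNearbyGeometry η C)
    (hnbg' : HasBoundedNearbyGeometry η' C) (hresp : ∀ n, ∀ I ∈ η n, h '' I ∈ η' n)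
    (hn : 1 ≤ n) (hI : Icc a b ∈ η n) (hab : a < b) (hu : u ∈ Icc (0 : ℝ) 1)
    (hub : u ≤ b + C * (b - a)) : C * (h u - h b) ≤ h b - h a := by
  have hIsub := hη.subset_Icc hn hI
  have hhab : h a < h b := hmono (hIsub ⟨le_rfl, hab.le⟩) (hIsub ⟨hab.le, le_rfl⟩) hab
  rcases le_or_gt u b with hub' | hbu
  · have := hmono.monotoneOn hu (hIsub ⟨hab.le, le_rfl⟩) hub'
    nlinarith
  obtain ⟨d, hbd, hR⟩ := hη.exists_right_adjacent hn hI hab (hbu.trans_le hu.2)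
  have hRsub := hη.subset_Icc hn hR
  have hhbd : h b < h d := hmono (hRsub ⟨le_rfl, hbd.le⟩) (hRsub ⟨hbd.le, le_rfl⟩) hbd
  have himI := hresp n _ hI
  have himR := hresp n _ hR
  rw [hmono.monotoneOn.image_Icc_eq hcont hab.le hIsub] at himI
  rw [hmono.monotoneOn.image_Icc_eq hcont hbd.le hRsub] at himR
  have hud : u ≤ d := by linarith [(hnbg.mul_sub_le_sub hI hR hab hbd).1]
  have hhud : h u ≤ h d := hmono.monotoneOn hu (hRsub ⟨hbd.le, le_rfl⟩) hud
  calc C * (h u - h b) ≤ C * (h d - h b) := by gcongr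
    _ ≤ h b - h a := (hnbg'.mul_sub_le_sub himI himR hhab hhbd).2

theorem exists_tripling_bound (hη : IsNestedPartition η) (hmono : StrictMonoOn h (Icc 0 1))
    (hcont : ContinuousOn h (Icc 0 1)) (hC : 0 < C) (hbg : HasBoundedGeometry η C)
    (hbg' : HasBoundedGeometry η' C) (hnbg : HasBoundedNearbyGeometry η C)
    (hnbg' : HasBoundedNearbyGeometry η' C) (hmesh : ∀ ε > 0, ∀ᶠ n in atTop, ∀ I ∈ η n, len I ≤ ε)
    (hresp : ∀ n, ∀ I ∈ η n, h '' I ∈ η' n) :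
    ∃ K > 0, ∃ δ > 0, TriplingBound h K δ := by
  obtain ⟨m, hm, hmI⟩ := hη.exists_pos_le_len 1
  obtain ⟨D, hD, hDR⟩ :=
    hη.exists_mul_len_image_le hC hbg hbg' hresp (κ := C ^ 3 / 3) (by positivity)
  -- `δ` is chosen so that the interval of `η 1` containing `(p + q) / 2` is long enough for
  -- `exists_nested_pair`.
  refine ⟨(C + 2) / (C * D), by positivity, C ^ 2 * m / 3, by positivity, ?_⟩
  intro p hp q hq hpq hqp u hu v hv hpu hvq
  have hw : (p + q) / 2 ∈ Icc (0 : ℝ) 1 := ⟨by linarith [hp.1], by linarith [hq.2]⟩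
  obtain ⟨I, hI, hwI⟩ := hη.exists_mem le_rfl hw
  obtain ⟨r, hr, R, hR, j, hrj, J, hJ, hwJ, hJR, hRlow, hRJ, hJup⟩ := hη.exists_nested_pair hC hbg
    hmesh le_rfl hI hwI (sub_pos.2 hpq) (by nlinarith [hmI I hI])
  have hDJ := hDR r j R J hr hrj hR hJ hJR (by linarith)
  obtain ⟨a, b, hab, rfl⟩ := hη.exists_Icc r R hR
  obtain ⟨c, d, hcd, rfl⟩ := hη.exists_Icc j J hJ
  have hRsub := hη.subset_Icc hr hR
  have hJsub := hη.subset_Icc (hr.trans hrj) hJ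
  rw [hmono.monotoneOn.len_image_Icc hcont hab.le hRsub,
    hmono.monotoneOn.len_image_Icc hcont hcd.le hJsub] at hDJ
  rw [len_Icc hab.le] at hRlow
  rw [len_Icc hcd.le] at hJup
  have hwab := hJR hwJ
  have hleft := hη.mul_sub_le_sub_of_ge_left hmono hcont hC.le hnbg hnbg' hresp hr hR hab hu
    (by nlinarith [hwab.1])
  have hright := hη.mul_sub_le_sub_of_le_right hmono hcont hC.le hnbg hnbg' hresp hr hR hab hv
    (by nlinarith [hwab.2])
  have hpc := hmono.monotoneOn hp (hJsub ⟨le_rfl, hcd.le⟩) (by linarith [hwJ.2] : p ≤ c)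
  have hdq := hmono.monotoneOn (hJsub ⟨hcd.le, le_rfl⟩) hq (by linarith [hwJ.1] : d ≤ q)
  rw [div_mul_eq_mul_div, le_div_iff₀ (by positivity)]
  calc (h v - h u) * (C * D) = D * (C * (h v - h b) + C * (h b - h a) + C * (h a - h u)) := by ring
    _ ≤ D * ((C + 2) * (h b - h a)) := by gcongr; linarith
    _ = (C + 2) * (D * (h b - h a)) := by ring
    _ ≤ (C + 2) * (h q - h p) := by gcongr; linarith

end IsNestedPartition

theorem TriplingBound.exists_global {h : ℝ → ℝ} {K δ : ℝ} (hmono : StrictMonoOn h (Icc 0 1))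
    (hcont : ContinuousOn h (Icc 0 1)) (hK : 0 < K) (hδ : 0 < δ) (hloc : TriplingBound h K δ) :
    ∃ K' > 0, TriplingBound h K' 1 := by
  obtain ⟨ε, hε, hgap⟩ := isCompact_Icc.exists_pos_le_sub_of_le_sub hmono hcont hδ
  have h01 : h 0 < h 1 := hmono (left_mem_Icc.2 zero_le_one) (right_mem_Icc.2 zero_le_one) one_pos
  refine ⟨max K ((h 1 - h 0) / ε), lt_max_of_lt_left hK, ?_⟩
  intro p hp q hq hpq _ u hu v hv hpu hvq
  have hhpq : 0 ≤ h q - h p := sub_nonneg.2 (hmono.monotoneOn hp hq hpq.le)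
  rcases le_or_gt (q - p) δ with hδpq | hδpq
  · exact (hloc p hp q hq hpq hδpq u hu v hv hpu hvq).trans (by gcongr; exact le_max_left _ _)
  calc h v - h u ≤ h 1 - h 0 := by
        have := hmono.monotoneOn (left_mem_Icc.2 zero_le_one) hu hu.1
        have := hmono.monotoneOn hv (right_mem_Icc.2 zero_le_one) hv.2
        linarith
    _ = (h 1 - h 0) / ε * ε := by field_simp
    _ ≤ (h 1 - h 0) / ε * (h q - h p) := by gcongr; exact hgap p hp q hq hδpq.le
    _ ≤ max K ((h 1 - h 0) / ε) * (h q - h p) := by gcongr; exact le_max_right _ _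

theorem TriplingBound.midpoint_ratio {h : ℝ → ℝ} {K : ℝ} (hmono : StrictMonoOn h (Icc 0 1))
    (hK : 0 < K) (hbound : TriplingBound h K 1) {x y : ℝ} (hx : x ∈ Icc (0 : ℝ) 1)
    (hy : y ∈ Icc (0 : ℝ) 1) (hxy : x < y) :
    K⁻¹ ≤ (h ((x + y) / 2) - h x) / (h y - h ((x + y) / 2)) ∧
      (h ((x + y) / 2) - h x) / (h y - h ((x + y) / 2)) ≤ K := by
  have hz : (x + y) / 2 ∈ Icc (0 : ℝ) 1 := ⟨by linarith [hx.1], by linarith [hy.2]⟩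
  have hxz : h x < h ((x + y) / 2) := hmono hx hz (by linarith)
  have hzy : h ((x + y) / 2) < h y := hmono hz hy (by linarith)
  have hleft := hbound x hx _ hz (by linarith) (by linarith [hx.1, hy.2]) x hx y hy
    (by linarith) (by linarith)
  have hright := hbound _ hz y hy (by linarith) (by linarith [hx.1, hy.2]) x hx y hy
    (by linarith) (by linarith)
  constructor
  · rw [inv_le_iff_one_le_mul₀ hK, div_mul_eq_mul_div, le_div_iff₀ (by linarith)]
    linarith
  · rw [div_le_iff₀ (by linarith)]
    linarith

theorem stmt_14_general (h : ℝ → ℝ) (C : ℝ) (hC : 0 < C)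
    (hmono : StrictMonoOn h (Set.Icc 0 1))
    (hcont : ContinuousOn h (Set.Icc 0 1))
    (η η' : ℕ → Finset (Set ℝ))
    (hIcc : ∀ n, ∀ I ∈ η n, ∃ c d : ℝ, c < d ∧ I = Set.Icc c d)
    (hcover : ∀ n, 1 ≤ n → ⋃ I ∈ η n, I = Set.Icc (0 : ℝ) 1)
    (hdisj : ∀ n, ∀ I ∈ η n, ∀ J ∈ η n, I ≠ J → interior I ∩ interior J = ∅)
    (hnested : ∀ n, ∀ J ∈ η (n + 1), ∃ I ∈ η n, J ⊆ I)
    -- bounded geometry with uniform constant C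
    (hbg : ∀ n, ∀ J ∈ η (n + 1), ∀ I ∈ η n, J ⊆ I → C * len I ≤ len J)
    (hbg' : ∀ n, ∀ J ∈ η' (n + 1), ∀ I ∈ η' n, J ⊆ I → C * len I ≤ len J)
    -- bounded nearby geometry with uniform constant C
    (hnbg : ∀ n, ∀ I ∈ η n, ∀ J ∈ η n, I ≠ J → (I ∩ J).Nonempty → C * len I ≤ len J)
    (hnbg' : ∀ n, ∀ I ∈ η' n, ∀ J ∈ η' n, I ≠ J → (I ∩ J).Nonempty → C * len I ≤ len J)
    -- exponentially decaying mesh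
    (hmesh : ∃ L > (0 : ℝ), ∃ μ : ℝ, 0 < μ ∧ μ < 1 ∧
      ∀ n, ∀ I ∈ η n, len I ≤ L * μ ^ n)
    -- h maps each interval of η n onto an interval of η' n
    (hresp : ∀ n, ∀ I ∈ η n, h '' I ∈ η' n) :
    ∃ K : ℝ, 0 < K ∧ ∀ x ∈ Set.Icc (0 : ℝ) 1, ∀ y ∈ Set.Icc (0 : ℝ) 1, x < y →
      K⁻¹ ≤ (h ((x + y) / 2) - h x) / (h y - h ((x + y) / 2)) ∧
        (h ((x + y) / 2) - h x) / (h y - h ((x + y) / 2)) ≤ K := by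
  obtain ⟨L, -, μ, hμ0, hμ1, hLμ⟩ := hmesh
  have hη : IsNestedPartition η := ⟨hIcc, hcover, hdisj, hnested⟩
  obtain ⟨K, hK, δ, hδ, hloc⟩ := hη.exists_tripling_bound hmono hcont hC hbg hbg' hnbg hnbg'
    (fun _ => eventually_forall_len_le hμ0.le hμ1 hLμ) hresp
  obtain ⟨K', hK', hbound⟩ := TriplingBound.exists_global hmono hcont hK hδ hloc
  exact ⟨K', hK', fun x hx y hy hxy => hbound.midpoint_ratio hmono hK' hx hy hxy⟩

/-- Abstract core of Theorem B: an increasing homeomorphism of `[0,1]` carrying one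
sequence of nested partitions with bounded geometry, bounded nearby geometry and
exponentially decaying mesh onto another such sequence is quasisymmetric. -/
theorem stmt_14 (h : ℝ → ℝ) (C : ℝ) (hC : 0 < C)
    (hmono : StrictMonoOn h (Set.Icc 0 1))
    (hcont : ContinuousOn h (Set.Icc 0 1))
    (himg : h '' Set.Icc 0 1 = Set.Icc (0 : ℝ) 1)
    (η η' : ℕ → Finset (Set ℝ))
    (hIcc : ∀ n, ∀ I ∈ η n, ∃ c d : ℝ, c < d ∧ I = Set.Icc c d)
    (hIcc' : ∀ n, ∀ I ∈ η' n, ∃ c d : ℝ, c < d ∧ I = Set.Icc c d)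
    (hcover : ∀ n, 1 ≤ n → ⋃ I ∈ η n, I = Set.Icc (0 : ℝ) 1)
    (hcover' : ∀ n, 1 ≤ n → ⋃ I ∈ η' n, I = Set.Icc (0 : ℝ) 1)
    (hdisj : ∀ n, ∀ I ∈ η n, ∀ J ∈ η n, I ≠ J → interior I ∩ interior J = ∅)
    (hdisj' : ∀ n, ∀ I ∈ η' n, ∀ J ∈ η' n, I ≠ J → interior I ∩ interior J = ∅)
    (hnested : ∀ n, ∀ J ∈ η (n + 1), ∃ I ∈ η n, J ⊆ I)
    (hnested' : ∀ n, ∀ J ∈ η' (n + 1), ∃ I ∈ η' n, J ⊆ I)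
    -- bounded geometry with uniform constant C
    (hbg : ∀ n, ∀ J ∈ η (n + 1), ∀ I ∈ η n, J ⊆ I → C * len I ≤ len J)
    (hbg' : ∀ n, ∀ J ∈ η' (n + 1), ∀ I ∈ η' n, J ⊆ I → C * len I ≤ len J)
    -- bounded nearby geometry with uniform constant C
    (hnbg : ∀ n, ∀ I ∈ η n, ∀ J ∈ η n, I ≠ J → (I ∩ J).Nonempty → C * len I ≤ len J)
    (hnbg' : ∀ n, ∀ I ∈ η' n, ∀ J ∈ η' n, I ≠ J → (I ∩ J).Nonempty → C * len I ≤ len J)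
    -- exponentially decaying mesh
    (hmesh : ∃ L > (0 : ℝ), ∃ μ : ℝ, 0 < μ ∧ μ < 1 ∧
      ∀ n, ∀ I ∈ η n, len I ≤ L * μ ^ n)
    (hmesh' : ∃ L > (0 : ℝ), ∃ μ : ℝ, 0 < μ ∧ μ < 1 ∧
      ∀ n, ∀ I ∈ η' n, len I ≤ L * μ ^ n)
    -- h maps each interval of η n onto an interval of η' n
    (hresp : ∀ n, ∀ I ∈ η n, h '' I ∈ η' n) :
    ∃ K : ℝ, 0 < K ∧ ∀ x ∈ Set.Icc (0 : ℝ) 1, ∀ y ∈ Set.Icc (0 : ℝ) 1, x < y →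
      K⁻¹ ≤ (h ((x + y) / 2) - h x) / (h y - h ((x + y) / 2)) ∧
        (h ((x + y) / 2) - h x) / (h y - h ((x + y) / 2)) ≤ K :=
  stmt_14_general h C hC hmono hcont η η' hIcc hcover hdisj hnested hbg hbg' hnbg hnbg' hmesh hresp
end
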